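/- arXiv:1304.6147 — 6 statements merged into one kernel-verified Lean document; each statement's English description precedes it below -/
import Mathlib

section
/- Let F be a field of characteristic p > 0 and ℛ = F[x,y,z] with standard grading. For e ≥ 2 and q = p^e, the monomial x·y^{q/p − 1}·z^{q − q/p − 1} ∈ ℛ_{q−1} does not lie in 𝒯_{e₁} ⋇ 𝒯_{e₂} for any positive integers e₁, e₂ with e₁ + e₂ = e. Consequently the twisted ring 𝒯(F[x,y,z]) is not a finitely generated ring extension of 𝒯_0 = F. -/
/-!
Write `q = p ^ e₁`. Every monomial of a twisted product `a * b ^ q` with `a` homogeneous of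
degree `q - 1` is `u + v` with `deg u = q - 1` and `v` divisible by `q`, since `b ^ q` is the
Frobenius twist of `expand q b`. For `x¹ y^{p^{e-1}-1} z^{…}` the `x`-exponent `1 < q` forces
`u_x = 1`, and `q ∣ p^{e-1}` forces `u_y ≡ -1 (mod q)`, so `deg u ≥ u_x + u_y ≥ q`.
-/

open MvPolynomial

namespace Finsupp

variable {σ : Type*}

theorem add_le_degree {i j : σ} (hij : i ≠ j) (u : σ →₀ ℕ) : u i + u j ≤ u.degree := by
  classical
  calc u i + u j = (single i (u i) + single j (u j)).degree := by simp
    _ ≤ u.degree := degree_mono fun k => by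
      by_cases hki : k = i
      · subst hki; simp [hij]
      · by_cases hkj : k = j
        · subst hkj; simp [Ne.symm hij]
        · simp [Ne.symm hki, Ne.symm hkj]

theorem le_degree_of_add_eq {i j : σ} (hij : i ≠ j) {q : ℕ} (hq : 1 < q) {m u v : σ →₀ ℕ}
    (huv : m = u + v) (hmi : m i = 1) (hmj : q ∣ m j + 1) (hvi : q ∣ v i) (hvj : q ∣ v j) :
    q ≤ u.degree := by
  have hi : u i + v i = 1 := by rw [← hmi, huv, add_apply]
  have hj : q ∣ u j + 1 + v j := by rwa [add_right_comm, ← add_apply, ← huv]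
  have hvi0 : v i = 0 := Nat.eq_zero_of_dvd_of_lt hvi (by omega)
  have hui : u i = 1 := by omega
  have huj : q - 1 ≤ u j := by
    have := Nat.le_of_dvd (Nat.succ_pos _) ((Nat.dvd_add_left hvj).mp hj)
    omega
  have := add_le_degree hij u
  omega

end Finsupp

namespace MvPolynomial

variable {σ R : Type*} [CommSemiring R] {p : ℕ} [ExpChar R p]

theorem coeff_pow_expChar_pow_of_not_dvd (b : MvPolynomial σ R) {k : ℕ} {v : σ →₀ ℕ} {i : σ}
    (hv : ¬ p ^ k ∣ v i) : coeff v (b ^ p ^ k) = 0 := by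
  rw [← map_iterateFrobenius_expand, coeff_map, coeff_expand_of_not_dvd _ hv, map_zero]

theorem coeff_mul_pow_expChar_pow_eq_zero {i j : σ} (hij : i ≠ j) {k : ℕ} (hq : 1 < p ^ k)
    {a : MvPolynomial σ R} (ha : a.IsHomogeneous (p ^ k - 1)) (b : MvPolynomial σ R)
    {m : σ →₀ ℕ} (hmi : m i = 1) (hmj : p ^ k ∣ m j + 1) : coeff m (a * b ^ p ^ k) = 0 := by
  classical
  rw [coeff_mul]
  refine Finset.sum_eq_zero fun ⟨u, v⟩ huv => ?_
  simp only [Finset.HasAntidiagonal.mem_antidiagonal] at huv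
  dsimp only
  by_cases hvi : p ^ k ∣ v i
  · by_cases hvj : p ^ k ∣ v j
    · have hdeg := Finsupp.le_degree_of_add_eq hij hq huv.symm hmi hmj hvi hvj
      rw [ha.coeff_eq_zero (by omega), zero_mul]
    · rw [coeff_pow_expChar_pow_of_not_dvd b hvj, mul_zero]
  · rw [coeff_pow_expChar_pow_of_not_dvd b hvi, mul_zero]

end MvPolynomial

theorem twisted_three_variables_not_finitely_generated_general (F : Type*) [Field F] (p : ℕ)
    [Fact p.Prime] [CharP F p] (e : ℕ) (e₁ e₂ : ℕ) (he₁ : 1 ≤ e₁)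
    (he₂ : 1 ≤ e₂) (hsum : e₁ + e₂ = e) :
    (X 0 : MvPolynomial (Fin 3) F) * (X 1) ^ (p ^ (e - 1) - 1) *
        (X 2) ^ (p ^ e - p ^ (e - 1) - 1) ∉
      Submodule.span F {f : MvPolynomial (Fin 3) F |
        ∃ a ∈ homogeneousSubmodule (Fin 3) F (p ^ e₁ - 1),
          ∃ b ∈ homogeneousSubmodule (Fin 3) F (p ^ e₂ - 1), f = a * b ^ p ^ e₁} := by
  have hp := (Fact.out : p.Prime)
  have hq : 1 < p ^ e₁ := Nat.one_lt_pow (by omega) hp.one_lt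
  set m : Fin 3 →₀ ℕ := Finsupp.single 0 1 + Finsupp.single 1 (p ^ (e - 1) - 1)
    + Finsupp.single 2 (p ^ e - p ^ (e - 1) - 1)
  have hm0 : m 0 = 1 := by simp [m]
  have hm1 : p ^ e₁ ∣ m 1 + 1 := by
    simpa [m, Nat.sub_add_cancel (Nat.one_le_pow _ _ hp.pos)] using pow_dvd_pow p (by omega)
  have htarget : (X 0 : MvPolynomial (Fin 3) F) * (X 1) ^ (p ^ (e - 1) - 1) *
      (X 2) ^ (p ^ e - p ^ (e - 1) - 1) = monomial m 1 := by
    rw [X_pow_eq_monomial, X_pow_eq_monomial, X, monomial_mul, monomial_mul, one_mul, one_mul]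
  have hspan : Submodule.span F {f : MvPolynomial (Fin 3) F |
        ∃ a ∈ homogeneousSubmodule (Fin 3) F (p ^ e₁ - 1),
          ∃ b ∈ homogeneousSubmodule (Fin 3) F (p ^ e₂ - 1), f = a * b ^ p ^ e₁} ≤
      LinearMap.ker (lcoeff F m) := by
    rw [Submodule.span_le]
    rintro _ ⟨a, ha, b, -, rfl⟩
    exact coeff_mul_pow_expChar_pow_eq_zero (by decide) hq ha b hm0 hm1
  intro hmem
  simpa [htarget] using hspan hmem

/-- Let `F` be a field of characteristic `p > 0` and `ℛ = F[x,y,z]` standard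
graded; `𝒯_e = ℛ_{p^e−1}` with twisted product `a ⋇ b = a·b^{p^{e₁}}` for `a ∈ 𝒯_{e₁}`,
`b ∈ 𝒯_{e₂}`.  For `e ≥ 2` and `q = p^e`, the monomial `x·y^{q/p−1}·z^{q−q/p−1} ∈ ℛ_{q−1}`
does not lie in `𝒯_{e₁} ⋇ 𝒯_{e₂}` (the `F`-span of such twisted products) for any positive
integers `e₁, e₂` with `e₁ + e₂ = e`.  (Consequently `𝒯(F[x,y,z])` is not a finitely
generated ring extension of `𝒯_0 = F`.) -/
theorem twisted_three_variables_not_finitely_generated (F : Type*) [Field F] (p : ℕ)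
    [Fact p.Prime] [CharP F p] (e : ℕ) (he : 2 ≤ e) (e₁ e₂ : ℕ) (he₁ : 1 ≤ e₁)
    (he₂ : 1 ≤ e₂) (hsum : e₁ + e₂ = e) :
    (X 0 : MvPolynomial (Fin 3) F) * (X 1) ^ (p ^ (e - 1) - 1) *
        (X 2) ^ (p ^ e - p ^ (e - 1) - 1) ∉
      Submodule.span F {f : MvPolynomial (Fin 3) F |
        ∃ a ∈ homogeneousSubmodule (Fin 3) F (p ^ e₁ - 1),
          ∃ b ∈ homogeneousSubmodule (Fin 3) F (p ^ e₂ - 1), f = a * b ^ p ^ e₁} :=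
  twisted_three_variables_not_finitely_generated_general F p e e₁ e₂ he₁ he₂ hsum
end

section
/- Let F be a field of characteristic p ≡ 1 (mod 3) and R = F[[x³, x²y, xy², y³]] the completed third Veronese of F[[x,y]]. With ω = (x²y, xy²)R, for every q = p^e the module ω^{(1−q)} equals (xy)^{1−q}R; consequently ℱ^e(E) is the cyclic R-module generated by (xy)^{1−q}F^e, and ℱ(E) = R{(xy)^{1−p}F} is generated over R by a single element of degree one, since (xy)^{1−p}F ∘ (xy)^{1−q}F^e = (xy)^{1−pq}F^{e+1}. -/
open MvPolynomial

lemma veronese_mono_mem {F K : Type*} [CommSemiring F] [CommRing K] [Algebra F K]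
    (x y : K) : ∀ N m n : ℕ, m + n = N → 3 ∣ N →
    x ^ m * y ^ n ∈ Algebra.adjoin F {x ^ 3, x ^ 2 * y, x * y ^ 2, y ^ 3} := by
  intro N
  induction N using Nat.strong_induction_on with
  | _ N ih =>
    intro m n hmn hd
    have hx3 : x ^ 3 ∈ Algebra.adjoin F {x ^ 3, x ^ 2 * y, x * y ^ 2, y ^ 3} :=
      Algebra.subset_adjoin (by simp)
    have hx2y : x ^ 2 * y ∈ Algebra.adjoin F {x ^ 3, x ^ 2 * y, x * y ^ 2, y ^ 3} :=
      Algebra.subset_adjoin (by simp)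
    have hxy2 : x * y ^ 2 ∈ Algebra.adjoin F {x ^ 3, x ^ 2 * y, x * y ^ 2, y ^ 3} :=
      Algebra.subset_adjoin (by simp)
    have hy3 : y ^ 3 ∈ Algebra.adjoin F {x ^ 3, x ^ 2 * y, x * y ^ 2, y ^ 3} :=
      Algebra.subset_adjoin (by simp)
    rcases m with _ | _ | _ | m
    · rcases n with _ | _ | _ | n
      · simpa using Subalgebra.one_mem _
      · omega
      · omega
      · have h : x ^ 0 * y ^ (n + 3) = y ^ 3 * (x ^ 0 * y ^ n) := by ring
        rw [h]
        exact mul_mem hy3 (ih (0 + n) (by omega) 0 n rfl (by omega))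
    · rcases n with _ | _ | _ | n
      · omega
      · omega
      · simpa using hxy2
      · have h : x ^ 1 * y ^ (n + 3) = y ^ 3 * (x ^ 1 * y ^ n) := by ring
        rw [h]
        exact mul_mem hy3 (ih (1 + n) (by omega) 1 n rfl (by omega))
    · rcases n with _ | _ | _ | n
      · omega
      · simpa using hx2y
      · omega
      · have h : x ^ 2 * y ^ (n + 3) = y ^ 3 * (x ^ 2 * y ^ n) := by ring
        rw [h]
        exact mul_mem hy3 (ih (2 + n) (by omega) 2 n rfl (by omega))
    · have h : x ^ (m + 3) * y ^ n = x ^ 3 * (x ^ m * y ^ n) := by ring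
      rw [h]
      exact mul_mem hx3 (ih (m + n) (by omega) m n rfl (by omega))

lemma veronese_span_eq {F K : Type*} [Field F] [Field K] [Algebra F K]
    (x y : K) (hx : x ≠ 0) (hy : y ≠ 0) (q : ℤ) (hq : (3 : ℤ) ∣ q - 1) :
    Submodule.span (Algebra.adjoin F {x ^ 3, x ^ 2 * y, x * y ^ 2, y ^ 3})
        {t : K | ∃ a b : ℤ, a ≤ q - 1 ∧ b ≤ q - 1 ∧ (3 : ℤ) ∣ a + b ∧ t = x ^ (-a) * y ^ (-b)}
      = Submodule.span (Algebra.adjoin F {x ^ 3, x ^ 2 * y, x * y ^ 2, y ^ 3})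
        {(x * y) ^ (1 - q)} := by
  apply le_antisymm
  · rw [Submodule.span_le]
    rintro t ⟨a, b, ha, hb, hd, rfl⟩
    rw [SetLike.mem_coe, Submodule.mem_span_singleton]
    refine ⟨⟨x ^ (q - 1 - a).toNat * y ^ (q - 1 - b).toNat,
      veronese_mono_mem x y _ _ _ rfl (by omega)⟩, ?_⟩
    have hu : ((q - 1 - a).toNat : ℤ) = q - 1 - a := Int.toNat_of_nonneg (by omega)
    have hv : ((q - 1 - b).toNat : ℤ) = q - 1 - b := Int.toNat_of_nonneg (by omega)
    show (x ^ (q - 1 - a).toNat * y ^ (q - 1 - b).toNat) * (x * y) ^ (1 - q)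
        = x ^ (-a) * y ^ (-b)
    calc (x ^ (q - 1 - a).toNat * y ^ (q - 1 - b).toNat) * (x * y) ^ (1 - q)
        = (x ^ (((q - 1 - a).toNat : ℤ)) * x ^ (1 - q)) *
            (y ^ (((q - 1 - b).toNat : ℤ)) * y ^ (1 - q)) := by
          rw [mul_zpow, zpow_natCast, zpow_natCast]; ring
      _ = x ^ (((q - 1 - a).toNat : ℤ) + (1 - q)) * y ^ (((q - 1 - b).toNat : ℤ) + (1 - q)) := by
          rw [zpow_add₀ hx, zpow_add₀ hy]
      _ = x ^ (-a) * y ^ (-b) := by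
          rw [hu, hv, show q - 1 - a + (1 - q) = -a by ring, show q - 1 - b + (1 - q) = -b by ring]
  · rw [Submodule.span_le, Set.singleton_subset_iff]
    apply Submodule.subset_span
    exact ⟨q - 1, q - 1, le_refl _, le_refl _, by omega, by
      rw [show (1 - q : ℤ) = -(q - 1) by ring, mul_zpow]⟩

/-- Let `F` be a field of characteristic `p ≡ 1 (mod 3)` and
`R = F[[x³, x²y, xy², y³]]` the (completed) third Veronese of `F[[x,y]]`, with canonical
module `ω = (x²y, xy²)R`.  For every `q = p^e`, the module
`ω^{(1−q)}` — the `R`-span of the elements `x^{-a} y^{-b}` with `a, b ≤ q − 1` and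
`3 ∣ a + b` — equals the cyclic module `(xy)^{1−q} R`.  Consequently `ℱ^e(E)` is the cyclic
`R`-module generated by `(xy)^{1−q} F^e`, and since
`(xy)^{1−p}F ∘ (xy)^{1−q}F^e = (xy)^{1−pq}F^{e+1}`, i.e. at the level of the twisted product
`(xy)^{1−p} · ((xy)^{1−q})^p = (xy)^{1−pq}`, the algebra `ℱ(E) = R{(xy)^{1−p}F}` is
generated over `R` by the single degree-one element `(xy)^{1−p}F`. -/
theorem veronese_p_one_mod_three (F : Type*) [Field F] (p : ℕ) [Fact p.Prime] [CharP F p]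
    (hp3 : p % 3 = 1) :
    ∀ e : ℕ,
      letI K := FractionRing (MvPolynomial (Fin 2) F)
      letI x : K := algebraMap (MvPolynomial (Fin 2) F) K (X 0)
      letI y : K := algebraMap (MvPolynomial (Fin 2) F) K (X 1)
      letI R : Subalgebra F K := Algebra.adjoin F {x ^ 3, x ^ 2 * y, x * y ^ 2, y ^ 3}
      -- `ω^{(1-p^e)}` is the cyclic module generated by `(xy)^{1-p^e}`:
      (Submodule.span R {t : K | ∃ a b : ℤ, a ≤ (p : ℤ) ^ e - 1 ∧ b ≤ (p : ℤ) ^ e - 1 ∧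
            (3 : ℤ) ∣ a + b ∧ t = x ^ (-a) * y ^ (-b)}
          = Submodule.span R {(x * y) ^ (1 - (p : ℤ) ^ e)}) ∧
      -- the composition rule `(xy)^{1−p}F ∘ (xy)^{1−p^e}F^e = (xy)^{1−p^{e+1}}F^{e+1}`:
      ((x * y) ^ (1 - (p : ℤ)) * ((x * y) ^ (1 - (p : ℤ) ^ e)) ^ (p : ℕ)
          = (x * y) ^ (1 - (p : ℤ) ^ (e + 1))) ∧
      -- hence `ℱ(E)` is generated by the single degree-one operator `(xy)^{1−p}F`:
      (Submodule.span R {(x * y) ^ (1 - (p : ℤ) ^ (e + 1))}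
          = Submodule.span R {(x * y) ^ (1 - (p : ℤ))} *
              Submodule.span R {((x * y) ^ (1 - (p : ℤ) ^ e)) ^ (p : ℕ)}) := by
  intro e
  set K := FractionRing (MvPolynomial (Fin 2) F)
  set x : K := algebraMap (MvPolynomial (Fin 2) F) K (X 0) with hxdef
  set y : K := algebraMap (MvPolynomial (Fin 2) F) K (X 1) with hydef
  have hinj := IsFractionRing.injective (MvPolynomial (Fin 2) F) K
  have hx : x ≠ 0 := by
    rw [hxdef]
    exact fun h => X_ne_zero 0 (hinj (by simpa using h))
  have hy : y ≠ 0 := by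
    rw [hydef]
    exact fun h => X_ne_zero 1 (hinj (by simpa using h))
  have hp3' : (p : ℤ) % 3 = 1 := by omega
  have h1 : (p : ℤ) ≡ 1 [ZMOD 3] := by change _ % _ = _ % _; omega
  have hqe : ∀ k : ℕ, (p : ℤ) ^ k % 3 = 1 := by
    intro k
    have := h1.pow k
    simpa [Int.ModEq] using this
  have hq : (3 : ℤ) ∣ (p : ℤ) ^ e - 1 := by have := hqe e; omega
  have hxy : x * y ≠ 0 := mul_ne_zero hx hy
  have h2 : (x * y) ^ (1 - (p : ℤ)) * ((x * y) ^ (1 - (p : ℤ) ^ e)) ^ (p : ℕ)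
      = (x * y) ^ (1 - (p : ℤ) ^ (e + 1)) := by
    rw [← zpow_natCast ((x * y) ^ (1 - (p : ℤ) ^ e)) p, ← zpow_mul, ← zpow_add₀ hxy]
    congr 1
    push_cast
    ring
  refine ⟨veronese_span_eq x y hx hy _ hq, h2, ?_⟩
  rw [Submodule.span_mul_span, Set.singleton_mul_singleton, h2]
end

section
/- Let F be a field of characteristic 3 and R = F[[x³, x²y, xy², y³]]. With ω = (x²y, xy²)R, for all q = 3^e and q' = 3^{e'} with e, e' ≥ 1, one has ω^{(1−q)} ⋇ ω^{(1−q')} = (x^q, y^q)·ω^{(1−qq')}, where a ⋇ b = a·b^q. In particular ω^{(1−3^e)} ≠ Σ_{e₁+e₂=e, e_i≥1} ω^{(1−3^{e₁})} ⋇ ω^{(1−3^{e₂})} for e ≥ 2, so ℱ(E) is not finitely generated over ℱ⁰(E) = R. -/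
open MvPolynomial
open Submodule


theorem frob_span_pair {F K : Type*} [Field F] [Field K] [Algebra F K] [CharP K 3]
    {S : Subalgebra F K} (u v : K) (e : ℕ) :
    span S ((· ^ (3^e : ℕ)) '' (span S {u, v} : Set K))
      = span S {u ^ (3^e:ℕ), v ^ (3^e:ℕ)} := by
  haveI : Fact (Nat.Prime 3) := ⟨by norm_num⟩
  apply le_antisymm
  · rw [span_le]
    rintro _ ⟨w, hw, rfl⟩
    induction hw using Submodule.span_induction with
    | mem z hz =>
      rcases hz with rfl | rfl
      · exact subset_span (Set.mem_insert _ _)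
      · exact subset_span (Set.mem_insert_of_mem _ rfl)
    | zero => simp only [Set.mem_singleton_iff] ; rw [zero_pow (by positivity)]; exact zero_mem _
    | add a b _ _ ha hb =>
      show (a+b)^(3^e:ℕ) ∈ _
      rw [add_pow_char_pow]; exact add_mem ha hb
    | smul r a _ ha =>
      have : (r • a) ^ (3^e:ℕ) = (r ^ (3^e:ℕ)) • a ^ (3^e:ℕ) := by
        show ((r:K) * a)^(3^e:ℕ) = ((r^(3^e:ℕ) : S) : K) * a ^ (3^e:ℕ)
        push_cast
        rw [mul_pow]
      show (r • a)^(3^e:ℕ) ∈ _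
      rw [this]
      exact smul_mem _ _ ha
  · rw [span_le]
    rintro _ (rfl | rfl)
    · exact subset_span ⟨u, subset_span (Set.mem_insert _ _), rfl⟩
    · exact subset_span ⟨v, subset_span (Set.mem_insert_of_mem _ rfl), rfl⟩


theorem span_pair_mul_span_pair' {R A : Type*} [CommSemiring R] [CommSemiring A] [Algebra R A]
    (a b c d : A) :
    span R {a, b} * span R {c, d} = span R {a * c, a * d, b * c, b * d} := by
  rw [Submodule.span_mul_span]
  congr 1
  ext z
  simp only [Set.mem_mul, Set.mem_insert_iff, Set.mem_singleton_iff]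
  aesop

theorem part1_core {F K : Type*} [Field F] [Field K] [Algebra F K] [CharP K 3]
    {S : Subalgebra F K} (x y : K) (hx : x ≠ 0) (hy : y ≠ 0) (e e' : ℕ) :
    span S {x ^ (2 - ((3^e:ℕ) : ℤ)) * y ^ (1 - ((3^e:ℕ) : ℤ)),
        x ^ (1 - ((3^e:ℕ) : ℤ)) * y ^ (2 - ((3^e:ℕ) : ℤ))} *
      span S ((· ^ (3^e:ℕ)) '' ((span S {x ^ (2 - ((3^e':ℕ) : ℤ)) * y ^ (1 - ((3^e':ℕ) : ℤ)),
        x ^ (1 - ((3^e':ℕ) : ℤ)) * y ^ (2 - ((3^e':ℕ) : ℤ))} : Submodule S K) : Set K))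
      = span S {x ^ (3^e:ℕ), y ^ (3^e:ℕ)} *
        span S {x ^ (2 - ((3^(e+e'):ℕ) : ℤ)) * y ^ (1 - ((3^(e+e'):ℕ) : ℤ)),
          x ^ (1 - ((3^(e+e'):ℕ) : ℤ)) * y ^ (2 - ((3^(e+e'):ℕ) : ℤ))} := by
  haveI : Fact (Nat.Prime 3) := ⟨by norm_num⟩
  have hpow : ∀ (a b : ℤ) (n : ℕ), (x^a*y^b)^n = x^(a*n)*y^(b*n) := by
    intro a b n
    rw [mul_pow, ← zpow_natCast (x^a), ← zpow_natCast (y^b), ← zpow_mul, ← zpow_mul]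
  have hmul : ∀ a b c d : ℤ, (x^a*y^b)*(x^c*y^d) = x^(a+c)*y^(b+d) := by
    intro a b c d
    rw [mul_mul_mul_comm, ← zpow_add₀ hx, ← zpow_add₀ hy]
  rw [frob_span_pair, span_pair_mul_span_pair', span_pair_mul_span_pair']
  have h1 : x ^ (2 - ((3^e:ℕ):ℤ)) * y ^ (1 - ((3^e:ℕ):ℤ)) * (x ^ (2 - ((3^e':ℕ):ℤ)) * y ^ (1 - ((3^e':ℕ):ℤ))) ^ (3^e:ℕ)
      = x ^ (3^e:ℕ) * (x ^ (2 - ((3^(e+e'):ℕ):ℤ)) * y ^ (1 - ((3^(e+e'):ℕ):ℤ))) := by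
    rw [hpow, hmul, ← zpow_natCast x (3^e), ← mul_assoc, ← zpow_add₀ hx]
    congr 1 <;> · congr 1 ; push_cast ; ring
  have h2 : x ^ (2 - ((3^e:ℕ):ℤ)) * y ^ (1 - ((3^e:ℕ):ℤ)) * (x ^ (1 - ((3^e':ℕ):ℤ)) * y ^ (2 - ((3^e':ℕ):ℤ))) ^ (3^e:ℕ)
      = y ^ (3^e:ℕ) * (x ^ (2 - ((3^(e+e'):ℕ):ℤ)) * y ^ (1 - ((3^(e+e'):ℕ):ℤ))) := by
    rw [hpow, hmul, ← zpow_natCast y (3^e), mul_left_comm, ← zpow_add₀ hy]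
    congr 1 <;> · congr 1 ; push_cast ; ring
  have h3 : x ^ (1 - ((3^e:ℕ):ℤ)) * y ^ (2 - ((3^e:ℕ):ℤ)) * (x ^ (2 - ((3^e':ℕ):ℤ)) * y ^ (1 - ((3^e':ℕ):ℤ))) ^ (3^e:ℕ)
      = x ^ (3^e:ℕ) * (x ^ (1 - ((3^(e+e'):ℕ):ℤ)) * y ^ (2 - ((3^(e+e'):ℕ):ℤ))) := by
    rw [hpow, hmul, ← zpow_natCast x (3^e), ← mul_assoc, ← zpow_add₀ hx]
    congr 1 <;> · congr 1 ; push_cast ; ring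
  have h4 : x ^ (1 - ((3^e:ℕ):ℤ)) * y ^ (2 - ((3^e:ℕ):ℤ)) * (x ^ (1 - ((3^e':ℕ):ℤ)) * y ^ (2 - ((3^e':ℕ):ℤ))) ^ (3^e:ℕ)
      = y ^ (3^e:ℕ) * (x ^ (1 - ((3^(e+e'):ℕ):ℤ)) * y ^ (2 - ((3^(e+e'):ℕ):ℤ))) := by
    rw [hpow, hmul, ← zpow_natCast y (3^e), mul_left_comm, ← zpow_add₀ hy]
    congr 1 <;> · congr 1 ; push_cast ; ring
  rw [h1, h2, h3, h4]
  congr 1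
  ext z
  simp only [Set.mem_insert_iff, Set.mem_singleton_iff]
  tauto

set_option maxHeartbeats 2000000 in
/-- Let `F` be a field of characteristic `3` and `R = F[[x³, x²y, xy², y³]]`,
with `ω = (x²y, xy²)R`.  By the paper's computation,
`ω^{(1−q)} = (x^{2−q} y^{1−q}, x^{1−q} y^{2−q}) R` as a fractional ideal.  For all `q = 3^e`
and `q' = 3^{e'}` with `e, e' ≥ 1`, the twisted product satisfies
`ω^{(1−q)} ⋇ ω^{(1−q')} = (x^q, y^q)·ω^{(1−qq')}`, where `I ⋇ J = I · J^{[q]}` and `J^{[q]}`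
is spanned by the `q`-th powers of elements of `J`.  In particular, for `e ≥ 2`,
`ω^{(1−3^e)} ≠ Σ_{e₁+e₂=e, e_i≥1} ω^{(1−3^{e₁})} ⋇ ω^{(1−3^{e₂})}`, so `ℱ(E)` is not a
finitely generated ring extension of `ℱ⁰(E) = R`. -/
theorem veronese_char_three_not_finitely_generated (F : Type*) [Field F] [CharP F 3] :
    letI K := FractionRing (MvPolynomial (Fin 2) F)
    letI x : K := algebraMap (MvPolynomial (Fin 2) F) K (X 0)
    letI y : K := algebraMap (MvPolynomial (Fin 2) F) K (X 1)
    letI R : Subalgebra F K := Algebra.adjoin F {x ^ 3, x ^ 2 * y, x * y ^ 2, y ^ 3}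
    letI W : ℕ → Submodule R K := fun q =>
      Submodule.span R {x ^ (2 - (q : ℤ)) * y ^ (1 - (q : ℤ)),
        x ^ (1 - (q : ℤ)) * y ^ (2 - (q : ℤ))}
    letI frob : Submodule R K → ℕ → Submodule R K := fun J q =>
      Submodule.span R ((· ^ q) '' (J : Set K))
    (∀ e e' : ℕ, 1 ≤ e → 1 ≤ e' →
      W (3 ^ e) * frob (W (3 ^ e')) (3 ^ e)
        = Submodule.span R {x ^ (3 ^ e : ℕ), y ^ (3 ^ e : ℕ)} * W (3 ^ (e + e'))) ∧
    (∀ e : ℕ, 2 ≤ e →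
      W (3 ^ e) ≠ ⨆ e₁ ∈ Finset.Ioo 0 e, W (3 ^ e₁) * frob (W (3 ^ (e - e₁))) (3 ^ e₁)) := by
  set K := FractionRing (MvPolynomial (Fin 2) F) with hK
  set x : K := algebraMap (MvPolynomial (Fin 2) F) K (X 0) with hxd
  set y : K := algebraMap (MvPolynomial (Fin 2) F) K (X 1) with hyd
  set R : Subalgebra F K := Algebra.adjoin F {x ^ 3, x ^ 2 * y, x * y ^ 2, y ^ 3} with hRd
  haveI : CharP K 3 := charP_of_injective_algebraMap (algebraMap F K).injective 3
  have hx : x ≠ 0 := by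
    rw [hxd]
    exact (map_ne_zero_iff _ (IsFractionRing.injective (MvPolynomial (Fin 2) F) K)).mpr
      (X_ne_zero (R := F) (0 : Fin 2))
  have hy : y ≠ 0 := by
    rw [hyd]
    exact (map_ne_zero_iff _ (IsFractionRing.injective (MvPolynomial (Fin 2) F) K)).mpr
      (X_ne_zero (R := F) (1 : Fin 2))
  constructor
  · intro e e' he he'
    exact part1_core x y hx hy e e'
  · intro e he h
    have hmul : ∀ a b c d : ℤ, (x^a*y^b)*(x^c*y^d) = x^(a+c)*y^(b+d) := by
      intro a b c d
      rw [mul_mul_mul_comm, ← zpow_add₀ hx, ← zpow_add₀ hy]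
    have hG1W : x ^ (2 - ((3^e:ℕ):ℤ)) * y ^ (1 - ((3^e:ℕ):ℤ)) ∈ Submodule.span R {x ^ (2 - ((3^e:ℕ):ℤ)) * y ^ (1 - ((3^e:ℕ):ℤ)), x ^ (1 - ((3^e:ℕ):ℤ)) * y ^ (2 - ((3^e:ℕ):ℤ))} :=
      Submodule.subset_span (Set.mem_insert _ _)
    set m : Submodule R K := Submodule.span R {x ^ 3, x ^ 2 * y, x * y ^ 2, y ^ 3} with hmd
    have hx3R : (x ^ 3 : K) ∈ R := by rw [hRd] ; exact Algebra.subset_adjoin (Set.mem_insert _ _)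
    have hy3R : (y ^ 3 : K) ∈ R := by
      rw [hRd] ; exact Algebra.subset_adjoin (Set.mem_insert_of_mem _ (Set.mem_insert_of_mem _ (Set.mem_insert_of_mem _ (rfl))))
    have hx3m : (x ^ 3 : K) ∈ m := Submodule.subset_span (Set.mem_insert _ _)
    have hy3m : (y ^ 3 : K) ∈ m := Submodule.subset_span (Set.mem_insert_of_mem _ (Set.mem_insert_of_mem _ (Set.mem_insert_of_mem _ (rfl))))
    have hmem3 : ∀ (z : K), z ^ 3 ∈ R → z ^ 3 ∈ m → ∀ e₁ : ℕ, 1 ≤ e₁ → z ^ (3 ^ e₁ : ℕ) ∈ m := by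
      intro z hzR hzm e₁ he₁
      obtain ⟨k, rfl⟩ : ∃ k, e₁ = k + 1 := ⟨e₁ - 1, (Nat.succ_pred_eq_of_pos he₁).symm⟩
      obtain ⟨j, hj⟩ : ∃ j, 3 ^ k = j + 1 := ⟨3 ^ k - 1, (Nat.succ_pred_eq_of_pos (by positivity)).symm⟩
      have key : z ^ (3 ^ (k+1) : ℕ) = ((⟨z ^ 3, hzR⟩ : R) ^ j) • (z ^ 3) := by
        show z ^ (3 ^ (k+1) : ℕ) = (((⟨z ^ 3, hzR⟩ : R) ^ j : R) : K) * z ^ 3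
        push_cast
        rw [← pow_succ, ← hj, ← pow_mul, ← pow_succ']
      rw [key]
      exact Submodule.smul_mem m _ hzm
    beta_reduce at h
    rw [h] at hG1W
    have hsup : (⨆ e₁ ∈ Finset.Ioo 0 e,
        Submodule.span R {x ^ (2 - ((3^e₁:ℕ):ℤ)) * y ^ (1 - ((3^e₁:ℕ):ℤ)),
          x ^ (1 - ((3^e₁:ℕ):ℤ)) * y ^ (2 - ((3^e₁:ℕ):ℤ))} *
        Submodule.span R ((fun w => w ^ (3^e₁:ℕ)) ''
          ↑(Submodule.span R {x ^ (2 - ((3^(e-e₁):ℕ):ℤ)) * y ^ (1 - ((3^(e-e₁):ℕ):ℤ)),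
            x ^ (1 - ((3^(e-e₁):ℕ):ℤ)) * y ^ (2 - ((3^(e-e₁):ℕ):ℤ))})))
        ≤ m * Submodule.span R {x ^ (2 - ((3^e:ℕ):ℤ)) * y ^ (1 - ((3^e:ℕ):ℤ)), x ^ (1 - ((3^e:ℕ):ℤ)) * y ^ (2 - ((3^e:ℕ):ℤ))} := by
      apply iSup₂_le
      intro e₁ he₁
      rw [Finset.mem_Ioo] at he₁
      have heq := part1_core (S := R) x y hx hy e₁ (e - e₁)
      rw [Nat.add_sub_cancel' he₁.2.le] at heq
      rw [heq]
      refine mul_le_mul' ?_ le_rfl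
      rw [Submodule.span_le]
      rintro z (rfl | rfl)
      · exact hmem3 x hx3R hx3m e₁ he₁.1
      · exact hmem3 y hy3R hy3m e₁ he₁.1
    have hG1m : x ^ (2 - ((3^e:ℕ):ℤ)) * y ^ (1 - ((3^e:ℕ):ℤ)) ∈ m * Submodule.span R {x ^ (2 - ((3^e:ℕ):ℤ)) * y ^ (1 - ((3^e:ℕ):ℤ)), x ^ (1 - ((3^e:ℕ):ℤ)) * y ^ (2 - ((3^e:ℕ):ℤ))} :=
      hsup hG1W
    have hC : m * Submodule.span R {x ^ (2 - ((3^e:ℕ):ℤ)) * y ^ (1 - ((3^e:ℕ):ℤ)), x ^ (1 - ((3^e:ℕ):ℤ)) * y ^ (2 - ((3^e:ℕ):ℤ))} ≤ Submodule.span R {x ^ (5 - ((3^e:ℕ):ℤ)) * y ^ (1 - ((3^e:ℕ):ℤ)), x ^ (4 - ((3^e:ℕ):ℤ)) * y ^ (2 - ((3^e:ℕ):ℤ)), x ^ (3 - ((3^e:ℕ):ℤ)) * y ^ (3 - ((3^e:ℕ):ℤ)), x ^ (2 - ((3^e:ℕ):ℤ)) * y ^ (4 - ((3^e:ℕ):ℤ)),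 x ^ (1 - ((3^e:ℕ):ℤ)) * y ^ (5 - ((3^e:ℕ):ℤ))} := by
      rw [hmd, Submodule.span_mul_span, Submodule.span_le]
      intro z hz
      rw [Set.mem_mul] at hz
      obtain ⟨a, ha, b, hb, rfl⟩ := hz
      simp only [Set.mem_insert_iff, Set.mem_singleton_iff] at ha hb
      rcases ha with rfl | rfl | rfl | rfl <;> rcases hb with rfl | rfl
      · refine Submodule.subset_span ?_
        have hcv : (x ^ 3 : K) * (x ^ (2 - ((3^e:ℕ):ℤ)) * y ^ (1 - ((3^e:ℕ):ℤ))) = x ^ (5 - ((3^e:ℕ):ℤ)) * y ^ (1 - ((3^e:ℕ):ℤ)) := by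
          rw [show (x ^ 3 : K) = x ^ (3:ℤ) * y ^ (0:ℤ) by simp [zpow_ofNat], hmul]
          congr 1 <;> · congr 1 ; push_cast ; ring
        rw [hcv]
        exact Set.mem_insert _ _
      · refine Submodule.subset_span ?_
        have hcv : (x ^ 3 : K) * (x ^ (1 - ((3^e:ℕ):ℤ)) * y ^ (2 - ((3^e:ℕ):ℤ))) = x ^ (4 - ((3^e:ℕ):ℤ)) * y ^ (2 - ((3^e:ℕ):ℤ)) := by
          rw [show (x ^ 3 : K) = x ^ (3:ℤ) * y ^ (0:ℤ) by simp [zpow_ofNat], hmul]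
          congr 1 <;> · congr 1 ; push_cast ; ring
        rw [hcv]
        exact Set.mem_insert_of_mem _ (Set.mem_insert _ _)
      · refine Submodule.subset_span ?_
        have hcv : (x ^ 2 * y : K) * (x ^ (2 - ((3^e:ℕ):ℤ)) * y ^ (1 - ((3^e:ℕ):ℤ))) = x ^ (4 - ((3^e:ℕ):ℤ)) * y ^ (2 - ((3^e:ℕ):ℤ)) := by
          rw [show (x ^ 2 * y : K) = x ^ (2:ℤ) * y ^ (1:ℤ) by simp [zpow_ofNat], hmul]
          congr 1 <;> · congr 1 ; push_cast ; ring
        rw [hcv]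
        exact Set.mem_insert_of_mem _ (Set.mem_insert _ _)
      · refine Submodule.subset_span ?_
        have hcv : (x ^ 2 * y : K) * (x ^ (1 - ((3^e:ℕ):ℤ)) * y ^ (2 - ((3^e:ℕ):ℤ))) = x ^ (3 - ((3^e:ℕ):ℤ)) * y ^ (3 - ((3^e:ℕ):ℤ)) := by
          rw [show (x ^ 2 * y : K) = x ^ (2:ℤ) * y ^ (1:ℤ) by simp [zpow_ofNat], hmul]
          congr 1 <;> · congr 1 ; push_cast ; ring
        rw [hcv]
        exact Set.mem_insert_of_mem _ (Set.mem_insert_of_mem _ (Set.mem_insert _ _))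
      · refine Submodule.subset_span ?_
        have hcv : (x * y ^ 2 : K) * (x ^ (2 - ((3^e:ℕ):ℤ)) * y ^ (1 - ((3^e:ℕ):ℤ))) = x ^ (3 - ((3^e:ℕ):ℤ)) * y ^ (3 - ((3^e:ℕ):ℤ)) := by
          rw [show (x * y ^ 2 : K) = x ^ (1:ℤ) * y ^ (2:ℤ) by simp [zpow_ofNat], hmul]
          congr 1 <;> · congr 1 ; push_cast ; ring
        rw [hcv]
        exact Set.mem_insert_of_mem _ (Set.mem_insert_of_mem _ (Set.mem_insert _ _))
      · refine Submodule.subset_span ?_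
        have hcv : (x * y ^ 2 : K) * (x ^ (1 - ((3^e:ℕ):ℤ)) * y ^ (2 - ((3^e:ℕ):ℤ))) = x ^ (2 - ((3^e:ℕ):ℤ)) * y ^ (4 - ((3^e:ℕ):ℤ)) := by
          rw [show (x * y ^ 2 : K) = x ^ (1:ℤ) * y ^ (2:ℤ) by simp [zpow_ofNat], hmul]
          congr 1 <;> · congr 1 ; push_cast ; ring
        rw [hcv]
        exact Set.mem_insert_of_mem _ (Set.mem_insert_of_mem _ (Set.mem_insert_of_mem _ (Set.mem_insert _ _)))
      · refine Submodule.subset_span ?_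
        have hcv : (y ^ 3 : K) * (x ^ (2 - ((3^e:ℕ):ℤ)) * y ^ (1 - ((3^e:ℕ):ℤ))) = x ^ (2 - ((3^e:ℕ):ℤ)) * y ^ (4 - ((3^e:ℕ):ℤ)) := by
          rw [show (y ^ 3 : K) = x ^ (0:ℤ) * y ^ (3:ℤ) by simp [zpow_ofNat], hmul]
          congr 1 <;> · congr 1 ; push_cast ; ring
        rw [hcv]
        exact Set.mem_insert_of_mem _ (Set.mem_insert_of_mem _ (Set.mem_insert_of_mem _ (Set.mem_insert _ _)))
      · refine Submodule.subset_span ?_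
        have hcv : (y ^ 3 : K) * (x ^ (1 - ((3^e:ℕ):ℤ)) * y ^ (2 - ((3^e:ℕ):ℤ))) = x ^ (1 - ((3^e:ℕ):ℤ)) * y ^ (5 - ((3^e:ℕ):ℤ)) := by
          rw [show (y ^ 3 : K) = x ^ (0:ℤ) * y ^ (3:ℤ) by simp [zpow_ofNat], hmul]
          congr 1 <;> · congr 1 ; push_cast ; ring
        rw [hcv]
        exact Set.mem_insert_of_mem _ (Set.mem_insert_of_mem _ (Set.mem_insert_of_mem _ (Set.mem_insert_of_mem _ (rfl))))
    have hRrange : ∀ r : R, ∃ p : MvPolynomial (Fin 2) F, algebraMap (MvPolynomial (Fin 2) F) K p = (r : K) := by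
      intro r
      have hle : R ≤ (IsScalarTower.toAlgHom F (MvPolynomial (Fin 2) F) K).range := by
        rw [hRd]
        apply Algebra.adjoin_le
        rintro z (rfl | rfl | rfl | rfl)
        · exact ⟨X 0 ^ 3, by rw [map_pow] ; rfl⟩
        · exact ⟨X 0 ^ 2 * X 1, by rw [map_mul, map_pow] ; rfl⟩
        · exact ⟨X 0 * X 1 ^ 2, by rw [map_mul, map_pow] ; rfl⟩
        · exact ⟨X 1 ^ 3, by rw [map_pow] ; rfl⟩
      obtain ⟨p, hp⟩ := hle r.2
      exact ⟨p, hp⟩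
    set u : K := x ^ (((3^e:ℕ):ℤ) - 1) * y ^ (((3^e:ℕ):ℤ) - 1) with hud
    set I : Ideal (MvPolynomial (Fin 2) F) :=
      Ideal.span {X 0 ^ 4 * X 1 ^ 0, X 0 ^ 3 * X 1 ^ 1, X 0 ^ 2 * X 1 ^ 2, X 0 ^ 1 * X 1 ^ 3,
        X 0 ^ 0 * X 1 ^ 4} with hId
    set N : Submodule R K :=
      { carrier := {z : K | u * z ∈ (algebraMap (MvPolynomial (Fin 2) F) K) '' (I : Set (MvPolynomial (Fin 2) F))}
        add_mem' := by
          rintro a b ⟨p, hp, hpe⟩ ⟨s, hs, hse⟩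
          exact ⟨p + s, I.add_mem hp hs, by rw [map_add, hpe, hse, mul_add]⟩
        zero_mem' := ⟨0, I.zero_mem, by simp⟩
        smul_mem' := by
          intro r z hz
          obtain ⟨p, hp, hpe⟩ := hz
          obtain ⟨t, ht⟩ := hRrange r
          refine ⟨t * p, I.mul_mem_left _ hp, ?_⟩
          rw [map_mul, ht, hpe]
          show _ = u * ((r : K) * z)
          ring } with hNd
    have hS5N : Submodule.span R {x ^ (5 - ((3^e:ℕ):ℤ)) * y ^ (1 - ((3^e:ℕ):ℤ)), x ^ (4 - ((3^e:ℕ):ℤ)) * y ^ (2 - ((3^e:ℕ):ℤ)), x ^ (3 - ((3^e:ℕ):ℤ)) * y ^ (3 - ((3^e:ℕ):ℤ)), x ^ (2 - ((3^e:ℕ):ℤ)) * y ^ (4 - ((3^e:ℕ):ℤ)), x ^ (1 - ((3^e:ℕ):ℤ)) * y ^ (5 - ((3^e:ℕ):ℤ))} ≤ N := by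
      have hNmem : ∀ w : K, w ∈ N ↔ u * w ∈
          (algebraMap (MvPolynomial (Fin 2) F) K) '' (I : Set (MvPolynomial (Fin 2) F)) :=
        fun w => Iff.rfl
      rw [Submodule.span_le]
      rintro z (rfl | rfl | rfl | rfl | rfl)
      · rw [SetLike.mem_coe, hNmem]
        refine ⟨X 0 ^ 4 * X 1 ^ 0, Ideal.subset_span (Set.mem_insert _ _), ?_⟩
        rw [hud, hmul, show (((3^e:ℕ):ℤ) - 1) + (5 - ((3^e:ℕ):ℤ)) = ((4:ℕ):ℤ) by push_cast ; ring,
          show (((3^e:ℕ):ℤ) - 1) + (1 - ((3^e:ℕ):ℤ)) = ((0:ℕ):ℤ) by push_cast ; ring,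
          zpow_natCast, zpow_natCast, map_mul, map_pow, map_pow, ← hxd, ← hyd]
      · rw [SetLike.mem_coe, hNmem]
        refine ⟨X 0 ^ 3 * X 1 ^ 1, Ideal.subset_span (Set.mem_insert_of_mem _ (Set.mem_insert _ _)), ?_⟩
        rw [hud, hmul, show (((3^e:ℕ):ℤ) - 1) + (4 - ((3^e:ℕ):ℤ)) = ((3:ℕ):ℤ) by push_cast ; ring,
          show (((3^e:ℕ):ℤ) - 1) + (2 - ((3^e:ℕ):ℤ)) = ((1:ℕ):ℤ) by push_cast ; ring,
          zpow_natCast, zpow_natCast, map_mul, map_pow, map_pow, ← hxd, ← hyd]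
      · rw [SetLike.mem_coe, hNmem]
        refine ⟨X 0 ^ 2 * X 1 ^ 2, Ideal.subset_span (Set.mem_insert_of_mem _ (Set.mem_insert_of_mem _ (Set.mem_insert _ _))), ?_⟩
        rw [hud, hmul, show (((3^e:ℕ):ℤ) - 1) + (3 - ((3^e:ℕ):ℤ)) = ((2:ℕ):ℤ) by push_cast ; ring,
          zpow_natCast, zpow_natCast, map_mul, map_pow, map_pow, ← hxd, ← hyd]
      · rw [SetLike.mem_coe, hNmem]
        refine ⟨X 0 ^ 1 * X 1 ^ 3, Ideal.subset_span (Set.mem_insert_of_mem _ (Set.mem_insert_of_mem _ (Set.mem_insert_of_mem _ (Set.mem_insert _ _)))), ?_⟩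
        rw [hud, hmul, show (((3^e:ℕ):ℤ) - 1) + (2 - ((3^e:ℕ):ℤ)) = ((1:ℕ):ℤ) by push_cast ; ring,
          show (((3^e:ℕ):ℤ) - 1) + (4 - ((3^e:ℕ):ℤ)) = ((3:ℕ):ℤ) by push_cast ; ring,
          zpow_natCast, zpow_natCast, map_mul, map_pow, map_pow, ← hxd, ← hyd]
      · rw [SetLike.mem_coe, hNmem]
        refine ⟨X 0 ^ 0 * X 1 ^ 4, Ideal.subset_span (Set.mem_insert_of_mem _ (Set.mem_insert_of_mem _ (Set.mem_insert_of_mem _ (Set.mem_insert_of_mem _ (rfl))))), ?_⟩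
        rw [hud, hmul, show (((3^e:ℕ):ℤ) - 1) + (1 - ((3^e:ℕ):ℤ)) = ((0:ℕ):ℤ) by push_cast ; ring,
          show (((3^e:ℕ):ℤ) - 1) + (5 - ((3^e:ℕ):ℤ)) = ((4:ℕ):ℤ) by push_cast ; ring,
          zpow_natCast, zpow_natCast, map_mul, map_pow, map_pow, ← hxd, ← hyd]
    have hG1N : x ^ (2 - ((3^e:ℕ):ℤ)) * y ^ (1 - ((3^e:ℕ):ℤ)) ∈ N := hS5N (hC hG1m)
    have hNmem2 : ∀ w : K, w ∈ N ↔ u * w ∈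
        (algebraMap (MvPolynomial (Fin 2) F) K) '' (I : Set (MvPolynomial (Fin 2) F)) :=
      fun w => Iff.rfl
    obtain ⟨p, hp, hpe⟩ := (hNmem2 _).mp hG1N
    have hux : u * (x ^ (2 - ((3^e:ℕ):ℤ)) * y ^ (1 - ((3^e:ℕ):ℤ))) = x := by
      rw [hud, hmul, show (((3^e:ℕ):ℤ) - 1) + (2 - ((3^e:ℕ):ℤ)) = (1:ℤ) by ring,
        show (((3^e:ℕ):ℤ) - 1) + (1 - ((3^e:ℕ):ℤ)) = (0:ℤ) by ring, zpow_one, zpow_zero, mul_one]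
    have hpX : p = X 0 := IsFractionRing.injective (MvPolynomial (Fin 2) F) K
      (by rw [hpe, hux, hxd])
    rw [hpX] at hp
    have hker : ∀ s ∈ ({X 0 ^ 4 * X 1 ^ 0, X 0 ^ 3 * X 1 ^ 1, X 0 ^ 2 * X 1 ^ 2,
        X 0 ^ 1 * X 1 ^ 3, X 0 ^ 0 * X 1 ^ 4} : Set (MvPolynomial (Fin 2) F)),
        (aeval (fun _ : Fin 2 => (DualNumber.eps : DualNumber F))) s = 0 := by
      rintro s (rfl | rfl | rfl | rfl | rfl) <;>
        simp [pow_succ, DualNumber.eps_mul_eps]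
    have hIker : I ≤ RingHom.ker (MvPolynomial.aeval
        (fun _ : Fin 2 => (DualNumber.eps : DualNumber F))).toRingHom := by
      rw [hId, Ideal.span_le]
      intro s hs
      simpa [RingHom.mem_ker] using hker s hs
    have hcontr := hIker hp
    rw [RingHom.mem_ker] at hcontr
    simp only [AlgHom.toRingHom_eq_coe, RingHom.coe_coe, aeval_X] at hcontr
    exact one_ne_zero (α := F) (by simpa using congrArg TrivSqZeroExt.snd hcontr)
end

section
/- Let A = F[[u,v,w,x,y,z]] over a field F of characteristic p > 0, and let I = (Δ₁, Δ₂, Δ₃) with Δ₁ = vz − wy, Δ₂ = wx − uz, Δ₃ = uy − vx. For q = p^e and non-negative integers s, t with s + t ≤ q − 1, one has y^s z^t (Δ₂Δ₃)^{q−1} ∈ I^{[q]} + x^{s+t}A. -/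
/-!
Expand `(Δ₂Δ₃)^{q-1} = (wx - uz)^{q-1} (uy - vx)^{q-1}` binomially. After multiplying by
`y^s z^t`, every term is a multiple of `x^a u^b y^c z^d`, and `s + t ≤ q - 1` forces
`a ≥ s + t`, or `b ≥ q` together with `c ≥ q` or `d ≥ q`. Hence the product lies in
`(x^{s+t}, u^q y^q, u^q z^q)`, and in characteristic `p` the Frobenius identities
`u^q y^q = Δ₃^q + v^q x^q` and `u^q z^q = w^q x^q - Δ₂^q` put the last two generators into
`I^{[q]} + (x^{s+t})`.
-/

open MvPowerSeries

section Monomials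

variable {R : Type*} [CommRing R] (u v w x y z : R) {q k : ℕ}

lemma monomial_mem_span_of_le {a b c d : ℕ} (h : k ≤ a ∨ q ≤ b ∧ (q ≤ c ∨ q ≤ d)) :
    x ^ a * u ^ b * y ^ c * z ^ d ∈ Ideal.span {x ^ k, u ^ q * y ^ q, u ^ q * z ^ q} := by
  rcases h with hx | ⟨hu, hy | hz⟩
  · obtain ⟨a, rfl⟩ := Nat.exists_eq_add_of_le hx
    exact Ideal.mem_of_dvd _ (⟨x ^ a * u ^ b * y ^ c * z ^ d, by ring⟩ : x ^ k ∣ _)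
      (Ideal.subset_span (by simp))
  · obtain ⟨b, rfl⟩ := Nat.exists_eq_add_of_le hu
    obtain ⟨c, rfl⟩ := Nat.exists_eq_add_of_le hy
    exact Ideal.mem_of_dvd _ (⟨x ^ a * u ^ b * y ^ c * z ^ d, by ring⟩ : u ^ q * y ^ q ∣ _)
      (Ideal.subset_span (by simp))
  · obtain ⟨b, rfl⟩ := Nat.exists_eq_add_of_le hu
    obtain ⟨d, rfl⟩ := Nat.exists_eq_add_of_le hz
    exact Ideal.mem_of_dvd _ (⟨x ^ a * u ^ b * y ^ c * z ^ d, by ring⟩ : u ^ q * z ^ q ∣ _)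
      (Ideal.subset_span (by simp))

lemma mul_minors_pow_mem_span {n s t : ℕ} (hst : s + t ≤ n) :
    y ^ s * z ^ t * ((w * x - u * z) * (u * y - v * x)) ^ n ∈
      Ideal.span {x ^ (s + t), u ^ (n + 1) * y ^ (n + 1), u ^ (n + 1) * z ^ (n + 1)} := by
  rw [mul_pow, sub_eq_add_neg, sub_eq_add_neg, add_pow, add_pow, Finset.sum_mul_sum]
  simp only [Finset.mul_sum]
  refine Ideal.sum_mem _ fun i hi => Ideal.sum_mem _ fun j hj => ?_
  rw [Finset.mem_range] at hi hj
  have hmono := monomial_mem_span_of_le u x y z (q := n + 1) (k := s + t)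
    (a := i + (n - j)) (b := n - i + j) (c := s + j) (d := t + (n - i)) (by omega)
  convert Ideal.mul_mem_left _
    ((-1) ^ (n - i) * (n.choose i : R) * w ^ i * (-v) ^ (n - j) * (n.choose j : R)) hmono
    using 1
  simp only [neg_pow (u * z), neg_pow (v * x), neg_pow v]
  ring

end Monomials

section Frobenius

variable {R : Type*} [CommRing R] (u v w x y z : R)

def minorsFrobeniusPow (q : ℕ) : Ideal R :=
  Ideal.span {(v * z - w * y) ^ q, (w * x - u * z) ^ q, (u * y - v * x) ^ q}

variable {p : ℕ} [Fact p.Prime] [CharP R p] (e : ℕ) {k : ℕ}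

lemma pow_mul_pow_mem_minorsFrobeniusPow_sup (hk : k ≤ p ^ e) :
    u ^ p ^ e * y ^ p ^ e ∈ minorsFrobeniusPow u v w x y z (p ^ e) + Ideal.span {x ^ k} ∧
    u ^ p ^ e * z ^ p ^ e ∈ minorsFrobeniusPow u v w x y z (p ^ e) + Ideal.span {x ^ k} := by
  have hx : x ^ k ∣ x ^ p ^ e := pow_dvd_pow x hk
  constructor
  · rw [show u ^ p ^ e * y ^ p ^ e = (u * y - v * x) ^ p ^ e + v ^ p ^ e * x ^ p ^ e by
      rw [sub_pow_char_pow, mul_pow, mul_pow]; ring]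
    exact Ideal.add_mem _ (Ideal.mem_sup_left (Ideal.subset_span (by simp)))
      (Ideal.mem_sup_right (Ideal.mem_span_singleton.2 (hx.mul_left _)))
  · rw [show u ^ p ^ e * z ^ p ^ e = w ^ p ^ e * x ^ p ^ e - (w * x - u * z) ^ p ^ e by
      rw [sub_pow_char_pow, mul_pow, mul_pow]; ring]
    exact Ideal.sub_mem _ (Ideal.mem_sup_right (Ideal.mem_span_singleton.2 (hx.mul_left _)))
      (Ideal.mem_sup_left (Ideal.subset_span (by simp)))

theorem mul_minors_pow_mem_minorsFrobeniusPow_sup {s t : ℕ} (hst : s + t ≤ p ^ e - 1) :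
    y ^ s * z ^ t * ((w * x - u * z) * (u * y - v * x)) ^ (p ^ e - 1) ∈
      minorsFrobeniusPow u v w x y z (p ^ e) + Ideal.span {x ^ (s + t)} := by
  have hq : p ^ e - 1 + 1 = p ^ e :=
    Nat.sub_add_cancel (Nat.one_le_pow _ _ (Fact.out : p.Prime).pos)
  have hmem := mul_minors_pow_mem_span u v w x y z hst
  rw [hq] at hmem
  obtain ⟨hy, hz⟩ :=
    pow_mul_pow_mem_minorsFrobeniusPow_sup u v w x y z e (k := s + t) (by omega)
  refine Ideal.span_le.2 ?_ hmem
  rintro g (rfl | rfl | rfl)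
  · exact Ideal.mem_sup_right (Ideal.subset_span rfl)
  · exact hy
  · exact hz

end Frobenius

/-- Let `A = F[[u,v,w,x,y,z]]` over a field `F` of characteristic `p > 0`,
and `I = (Δ₁, Δ₂, Δ₃)` the ideal of 2×2 minors of the 2×3 matrix with rows `(u,v,w)` and
`(x,y,z)`: `Δ₁ = vz − wy`, `Δ₂ = wx − uz`, `Δ₃ = uy − vx`.  For `q = p^e` and non-negative
integers `s, t` with `s + t ≤ q − 1`, one has
`y^s z^t (Δ₂Δ₃)^{q−1} ∈ I^{[q]} + x^{s+t} A`, where `I^{[q]} = (Δ₁^q, Δ₂^q, Δ₃^q)`. -/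
theorem fedder_membership (F : Type*) [Field F] (p : ℕ) [Fact p.Prime] [CharP F p]
    (e : ℕ) (s t : ℕ) (hst : s + t ≤ p ^ e - 1) :
    letI A := MvPowerSeries (Fin 6) F
    letI u : A := X 0
    letI v : A := X 1
    letI w : A := X 2
    letI x : A := X 3
    letI y : A := X 4
    letI z : A := X 5
    letI Δ₁ : A := v * z - w * y
    letI Δ₂ : A := w * x - u * z
    letI Δ₃ : A := u * y - v * x
    y ^ s * z ^ t * (Δ₂ * Δ₃) ^ (p ^ e - 1) ∈
      Ideal.span {Δ₁ ^ p ^ e, Δ₂ ^ p ^ e, Δ₃ ^ p ^ e} + Ideal.span {x ^ (s + t)} := by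
  have : CharP (MvPowerSeries (Fin 6) F) p := charP_of_injective_algebraMap' F p
  exact mul_minors_pow_mem_minorsFrobeniusPow_sup _ _ _ _ _ _ e hst
end

section
/- Let f, g be two elements generating an ideal J in a commutative ring, and q a positive integer. Then J^{2q−1} ⊆ (f^q, g^q). More generally, if I is a prime ideal of a Noetherian ring of characteristic p such that I becomes 2-generated after localization at I, and I is the unique associated prime of I^{[q]}, then I^{2q−1} ⊆ I^{[q]}. -/
/-!
Expanding `(f, g)^(2q-1)` by the binomial theorem, every monomial `f^a g^b` has `a + b = 2q - 1`,
so `a ≥ q` or `b ≥ q`. For the second part, after localizing at `I` the ideal `I` is generated by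
two elements, whose `q`-th powers lie in the extension of `I^{[q]}`; so the pigeonhole bound holds
in `R_I`. Since `I` is the only associated prime of `R ⧸ I^{[q]}`, every element outside `I` is a
nonzerodivisor modulo `I^{[q]}`, hence `I^{[q]}` is contracted from `R_I` and the bound descends
to `R`.
-/

/-- The `q`-th Frobenius power of an ideal: `I^{[q]}` is generated by `q`-th powers of
elements of `I`. -/
def Ideal.frobeniusPower {R : Type*} [CommRing R] (I : Ideal R) (q : ℕ) : Ideal R :=
  Ideal.span ((· ^ q) '' (I : Set R))

namespace Ideal

variable {R : Type*} [CommRing R]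

theorem sup_pow_two_mul_sub_one_le (I J : Ideal R) (q : ℕ) :
    (I ⊔ J) ^ (2 * q - 1) ≤ I ^ q ⊔ J ^ q := by
  rw [← add_eq_sup, ← add_eq_sup, add_pow, sum_eq_sup]
  refine Finset.sup_le fun i hi => ?_
  rw [Finset.mem_range] at hi
  by_cases hiq : q ≤ i
  · exact mul_le_left.trans (mul_le_left.trans ((pow_le_pow_right hiq).trans le_sup_left))
  · exact mul_le_left.trans (mul_le_right.trans ((pow_le_pow_right (by omega)).trans le_sup_right))

theorem span_pair_pow_two_mul_sub_one_le (f g : R) (q : ℕ) :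
    span {f, g} ^ (2 * q - 1) ≤ span {f ^ q, g ^ q} := by
  rw [span_insert, span_insert, ← span_singleton_pow, ← span_singleton_pow]
  exact sup_pow_two_mul_sub_one_le _ _ q

theorem pow_mem_frobeniusPower {I : Ideal R} {x : R} (hx : x ∈ I) (q : ℕ) :
    x ^ q ∈ I.frobeniusPower q :=
  subset_span ⟨x, hx, rfl⟩

theorem mem_of_mul_mem_of_forall_associatedPrimes [IsNoetherianRing R] {J : Ideal R} {t x : R}
    (ht : ∀ Q ∈ associatedPrimes R (R ⧸ J), t ∉ Q) (htx : t * x ∈ J) : x ∈ J := by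
  by_contra hx
  have hzero : t ∈ {r : R | ∃ y : R ⧸ J, y ≠ 0 ∧ r • y = 0} :=
    ⟨Quotient.mk J x, by rwa [ne_eq, Quotient.eq_zero_iff_mem],
      (Quotient.eq_zero_iff_mem (I := J)).mpr htx⟩
  rw [← biUnion_associatedPrimes_eq_zero_divisors] at hzero
  obtain ⟨Q, hQ, htQ⟩ := Set.mem_iUnion₂.mp hzero
  exact ht Q hQ htQ

end Ideal

namespace IsLocalization

variable {R : Type*} [CommRing R] {S : Type*} [CommRing S] [Algebra R S]

theorem pow_mem_map_frobeniusPower (M : Submonoid R) [IsLocalization M S] {I : Ideal R} {z : S}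
    (hz : z ∈ I.map (algebraMap R S)) (q : ℕ) :
    z ^ q ∈ (I.frobeniusPower q).map (algebraMap R S) := by
  obtain ⟨⟨y, s⟩, rfl⟩ := mk'_surjective M z
  obtain ⟨m, hm, hmy⟩ := (mk'_mem_map_algebraMap_iff M S I y s).mp hz
  rw [← mk'_pow, mk'_mem_map_algebraMap_iff]
  exact ⟨m ^ q, pow_mem hm q, mul_pow m y q ▸ Ideal.pow_mem_frobeniusPower hmy q⟩

theorem map_pow_two_mul_sub_one_le_map_frobeniusPower (M : Submonoid R) [IsLocalization M S]
    {I : Ideal R} (hI : ∃ a b : S, I.map (algebraMap R S) = Ideal.span {a, b}) (q : ℕ) :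
    (I ^ (2 * q - 1)).map (algebraMap R S) ≤ (I.frobeniusPower q).map (algebraMap R S) := by
  obtain ⟨a, b, hab⟩ := hI
  have ha : a ∈ I.map (algebraMap R S) := hab ▸ Ideal.subset_span (by simp)
  have hb : b ∈ I.map (algebraMap R S) := hab ▸ Ideal.subset_span (by simp)
  rw [Ideal.map_pow, hab]
  refine (Ideal.span_pair_pow_two_mul_sub_one_le a b q).trans (Ideal.span_le.mpr ?_)
  rintro z (rfl | rfl)
  exacts [pow_mem_map_frobeniusPower M ha q, pow_mem_map_frobeniusPower M hb q]

theorem under_map_of_forall_associatedPrimes_disjoint [IsNoetherianRing R] (M : Submonoid R)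
    [IsLocalization M S] {J : Ideal R}
    (hJ : ∀ Q ∈ associatedPrimes R (R ⧸ J), Disjoint (M : Set R) Q) :
    (J.map (algebraMap R S)).under R = J := by
  refine le_antisymm (fun x hx => ?_) Ideal.le_comap_map
  obtain ⟨m, hm, hmx⟩ := (algebraMap_mem_map_algebraMap_iff M S J x).mp hx
  exact Ideal.mem_of_mul_mem_of_forall_associatedPrimes
    (fun Q hQ => Set.disjoint_left.mp (hJ Q hQ) hm) hmx

end IsLocalization

theorem pigeonhole_power_containment_general (p : ℕ) :
    (∀ (S : Type) [CommRing S] (f g : S) (q : ℕ), 0 < q →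
      (Ideal.span {f, g} : Ideal S) ^ (2 * q - 1) ≤ Ideal.span {f ^ q, g ^ q}) ∧
    (∀ (R : Type) [CommRing R] [IsNoetherianRing R] [CharP R p]
      (I : Ideal R) (_ : I.IsPrime) (e : ℕ),
      (∃ a b : Localization.AtPrime I,
        Ideal.map (algebraMap R (Localization.AtPrime I)) I = Ideal.span {a, b}) →
      associatedPrimes R (R ⧸ I.frobeniusPower (p ^ e)) = {I} →
      I ^ (2 * p ^ e - 1) ≤ I.frobeniusPower (p ^ e)) := by
  refine ⟨fun S _ f g q _ => Ideal.span_pair_pow_two_mul_sub_one_le f g q, ?_⟩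
  intro R _ _ _ I _ e hgen hassoc
  have hdisj : ∀ Q ∈ associatedPrimes R (R ⧸ I.frobeniusPower (p ^ e)),
      Disjoint (I.primeCompl : Set R) Q := by
    rw [hassoc]
    rintro Q rfl
    exact disjoint_compl_left
  rw [← IsLocalization.under_map_of_forall_associatedPrimes_disjoint I.primeCompl
    (S := Localization.AtPrime I) hdisj]
  exact Ideal.map_le_iff_le_comap.mp
    (IsLocalization.map_pow_two_mul_sub_one_le_map_frobeniusPower I.primeCompl hgen _)

/-- (a) If `J = (f, g)` is a 2-generated ideal of a commutative ring and `q`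
a positive integer, then `J^{2q−1} ⊆ (f^q, g^q)` (pigeonhole).  (b) More generally, if `I`
is a prime ideal of a Noetherian ring of characteristic `p` such that `I` becomes
2-generated after localization at `I`, and `I` is the unique associated prime of the
Frobenius power `I^{[q]}` (`q = p^e`), then `I^{2q−1} ⊆ I^{[q]}`. -/
theorem pigeonhole_power_containment (p : ℕ) (hp : p.Prime) :
    (∀ (S : Type) [CommRing S] (f g : S) (q : ℕ), 0 < q →
      (Ideal.span {f, g} : Ideal S) ^ (2 * q - 1) ≤ Ideal.span {f ^ q, g ^ q}) ∧
    (∀ (R : Type) [CommRing R] [IsNoetherianRing R] [CharP R p]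
      (I : Ideal R) (_ : I.IsPrime) (e : ℕ),
      (∃ a b : Localization.AtPrime I,
        Ideal.map (algebraMap R (Localization.AtPrime I)) I = Ideal.span {a, b}) →
      associatedPrimes R (R ⧸ I.frobeniusPower (p ^ e)) = {I} →
      I ^ (2 * p ^ e - 1) ≤ I.frobeniusPower (p ^ e)) :=
  pigeonhole_power_containment_general p
end

section
/- Let A = F[[u,v,w,x,y,z]], char F = p > 0, and I the ideal of 2×2 minors of the 2×3 generic matrix. For q = p^e, with f_{s,t} defined by y^s z^t (Δ₂Δ₃)^{q−1} ≡ x^{s+t} f_{s,t} mod I^{[q]} (0 ≤ s + t ≤ q − 1), each f_{s,t} is well-defined modulo I^{[q]} and satisfies f_{s,t}·I ⊆ I^{[q]}, i.e., f_{s,t} ∈ I^{[q]} :_A I. -/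
/-!
Modulo `I`, the variable `x` is a nonzerodivisor. Reducing monomials by the moves `vx → uy`,
`wx → uz`, `vz → wy` brings every series into a normal form supported on standard monomials (those
divisible by none of `vx, wx, vz`), and the substitution `u, v, w, x, y, z ↦ as, bs, cs, at, bt, ct`
kills `I` while separating standard monomials; as the minors are homogeneous, the infinitely many
reductions add up degree by degree. In characteristic `p` the ideal `I^[q]` is the extension of `I`
along `expand q`, over whose image the power series ring is free on the monomials `X ^ r` with
`r < q`; comparing components, `x` stays a nonzerodivisor modulo `I^[q]`. Both claims then follow
by cancelling `x ^ (s + t)`, using `x Δ₁ = -y Δ₂ - z Δ₃` to get `Δ₁ (Δ₂ Δ₃) ^ (q - 1) ∈ I^[q]`.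
-/

open MvPowerSeries Finsupp

theorem Nat.le_and_eq_of_add_mul_eq_mul_add {q a b d r : ℕ} (h : a + q * b = q * d + r)
    (hr : r < q) : b ≤ d ∧ a = q * (d - b) + r := by
  have hb : b ≤ d := by
    by_contra! hlt
    nlinarith
  obtain ⟨c, rfl⟩ := Nat.exists_eq_add_of_le hb
  refine ⟨hb, ?_⟩
  rw [Nat.add_sub_cancel_left]
  linarith

namespace Finsupp

variable {σ : Type*}

theorem exists_nsmul_eq_of_forall_dvd {q : ℕ} {b : σ →₀ ℕ} (h : ∀ i, q ∣ b i) :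
    ∃ c, q • c = b :=
  ⟨b.mapRange (· / q) (Nat.zero_div q), ext fun i => by simp [Nat.mul_div_cancel' (h i)]⟩

theorem le_and_eq_of_add_nsmul_eq_nsmul_add {q : ℕ} {a b d r : σ →₀ ℕ}
    (h : a + q • b = q • d + r) (hr : ∀ i, r i < q) : b ≤ d ∧ a = q • (d - b) + r := by
  have key i := Nat.le_and_eq_of_add_mul_eq_mul_add (by simpa using DFunLike.congr_fun h i) (hr i)
  exact ⟨fun i => (key i).1, ext fun i => by simpa using (key i).2⟩

theorem le_equivFunOnFinite_symm_const_iff_lt [Finite σ] {q : ℕ} (hq : q ≠ 0) {r : σ →₀ ℕ} :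
    r ≤ equivFunOnFinite.symm (fun _ => q - 1) ↔ ∀ i, r i < q := by
  simp only [Finsupp.le_def, coe_equivFunOnFinite_symm]
  exact forall_congr' fun i => by omega

end Finsupp

namespace MvPowerSeries

variable {σ R : Type*} [CommRing R]

section FrobeniusComponent

variable (q : ℕ)

/-- For `r < q`, the coordinates of `g` in the basis `(X ^ r)_r` of `MvPowerSeries σ R` over the
image of `expand q`. -/
noncomputable def frobeniusComponent (r : σ →₀ ℕ) :
    MvPowerSeries σ R →ₗ[R] MvPowerSeries σ R where
  toFun g d := coeff (q • d + r) g
  map_add' _ _ := rfl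
  map_smul' _ _ := rfl

theorem coeff_frobeniusComponent (r d : σ →₀ ℕ) (g : MvPowerSeries σ R) :
    coeff d (frobeniusComponent q r g) = coeff (q • d + r) g := rfl

variable {q} (hq : q ≠ 0)

theorem frobeniusComponent_mul_expand {r : σ →₀ ℕ} (hr : ∀ i, r i < q) (h g : MvPowerSeries σ R) :
    frobeniusComponent q r (h * expand q hq g) = frobeniusComponent q r h * g := by
  classical
  ext d
  rw [coeff_frobeniusComponent, coeff_mul, coeff_mul]
  symm
  refine Finset.sum_of_injOn (fun x => (q • x.1 + r, q • x.2)) ?_ ?_ ?_ ?_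
  · rintro ⟨a, b⟩ - ⟨a', b'⟩ - hab
    simp only [Prod.mk.injEq, add_left_inj, nsmul_right_inj hq] at hab
    simp [hab]
  · rintro ⟨a, b⟩ hab
    simp only [Finset.mem_coe, Finset.HasAntidiagonal.mem_antidiagonal] at hab ⊢
    rw [← hab, smul_add]
    abel
  · rintro ⟨a, b⟩ hab hnot
    by_cases hdvd : ∀ i, q ∣ b i
    · obtain ⟨c, rfl⟩ := exists_nsmul_eq_of_forall_dvd hdvd
      obtain ⟨hc, rfl⟩ := le_and_eq_of_add_nsmul_eq_nsmul_add
        (Finset.HasAntidiagonal.mem_antidiagonal.mp hab) hr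
      exact absurd ⟨(d - c, c), by simpa using tsub_add_cancel_of_le hc, rfl⟩ hnot
    · push Not at hdvd
      obtain ⟨i, hi⟩ := hdvd
      simp [coeff_expand_of_not_dvd q hq g hi]
  · rintro ⟨a, b⟩ -
    simp [coeff_frobeniusComponent]

theorem frobeniusComponent_add_single_X_mul (r : σ →₀ ℕ) (i : σ) (g : MvPowerSeries σ R) :
    frobeniusComponent q (r + single i 1) (X i * g) = frobeniusComponent q r g := by
  ext d
  rw [coeff_frobeniusComponent, coeff_frobeniusComponent, X_def, coeff_monomial_mul, ← add_assoc,
    if_pos le_add_self, add_tsub_cancel_right, one_mul]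

theorem frobeniusComponent_X_mul_of_eq_zero (hq : q ≠ 0) {r : σ →₀ ℕ} {i : σ} (hri : r i = 0)
    (g : MvPowerSeries σ R) :
    frobeniusComponent q r (X i * g) = X i * frobeniusComponent q (r + single i (q - 1)) g := by
  ext d
  rw [coeff_frobeniusComponent, X_def, coeff_monomial_mul, coeff_monomial_mul]
  have hle : single i 1 ≤ q • d + r ↔ single i 1 ≤ d := by
    simp [Finsupp.single_le_iff, hri, Nat.one_le_iff_ne_zero, hq]
  by_cases hd : single i 1 ≤ d
  · have hdi : 1 ≤ d i := by simpa [Finsupp.single_le_iff] using hd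
    have hexp : q • d + r - single i 1 = q • (d - single i 1) + (r + single i (q - 1)) := by
      ext j
      rcases eq_or_ne j i with rfl | hj
      · have := Nat.le_mul_of_pos_right q hdi
        simp [hri, Nat.mul_sub_one]
        omega
      · simp [Ne.symm hj]
    rw [if_pos (hle.mpr hd), if_pos hd, coeff_frobeniusComponent, hexp]
  · rw [if_neg (mt hle.mp hd), if_neg hd]

variable [Finite σ] [DecidableEq σ]

theorem sum_monomial_mul_expand_frobeniusComponent (g : MvPowerSeries σ R) :
    ∑ r ∈ Finset.Iic (equivFunOnFinite.symm fun _ : σ => q - 1),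
      monomial r 1 * expand q hq (frobeniusComponent q r g) = g := by
  ext e
  set r₀ := e.mapRange (· % q) (Nat.zero_mod q)
  have he : q • e.mapRange (· / q) (Nat.zero_div q) + r₀ = e :=
    Finsupp.ext fun i => by simp [r₀, Nat.div_add_mod]
  rw [map_sum, Finset.sum_eq_single_of_mem r₀]
  · conv_lhs => rw [← he]
    rw [coeff_monomial_mul, if_pos le_add_self, one_mul, add_tsub_cancel_right, coeff_expand_smul,
      coeff_frobeniusComponent, he]
  · rw [Finset.mem_Iic, le_equivFunOnFinite_symm_const_iff_lt hq]
    exact fun i => Nat.mod_lt _ (Nat.pos_of_ne_zero hq)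
  · intro r hr hne
    rw [coeff_monomial_mul]
    split_ifs with hle
    · obtain ⟨i, hi⟩ : ∃ i, ¬ q ∣ (e - r) i := by
        by_contra! hdvd
        refine hne (Finsupp.ext fun i => ?_)
        obtain ⟨c, hc⟩ := hdvd i
        have hri := (le_equivFunOnFinite_symm_const_iff_lt hq).mp (Finset.mem_Iic.mp hr) i
        have : e i = q * c + r i := by
          have := hle i
          simp at hc
          omega
        simp [r₀, this, Nat.mod_eq_of_lt hri]
      rw [coeff_expand_of_not_dvd q hq _ hi, mul_zero]
    · rfl

theorem mem_span_image_expand_iff {S : Set (MvPowerSeries σ R)} {g : MvPowerSeries σ R} :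
    g ∈ Ideal.span (expand q hq '' S) ↔
      ∀ r : σ →₀ ℕ, (∀ i, r i < q) → frobeniusComponent q r g ∈ Ideal.span S := by
  constructor
  · intro hg r hr
    suffices ∀ h, frobeniusComponent q r (h * g) ∈ Ideal.span S by simpa using this 1
    induction hg using Submodule.span_induction with
    | mem x hx =>
      obtain ⟨s, hs, rfl⟩ := hx
      intro h
      rw [frobeniusComponent_mul_expand hq hr]
      exact Ideal.mul_mem_left _ _ (Ideal.subset_span hs)
    | zero => simp
    | add x y _ _ hx hy =>
      intro h
      rw [mul_add, map_add]
      exact add_mem (hx h) (hy h)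
    | smul a x _ hx =>
      intro h
      rw [smul_eq_mul, ← mul_assoc]
      exact hx _
  · intro h
    rw [← sum_monomial_mul_expand_frobeniusComponent hq g]
    refine Ideal.sum_mem _ fun r hr => Ideal.mul_mem_left _ _ ?_
    rw [← Ideal.map_span]
    exact Ideal.mem_map_of_mem _
      (h r ((le_equivFunOnFinite_symm_const_iff_lt hq).mp (Finset.mem_Iic.mp hr)))

theorem mem_span_image_expand_of_X_mul_mem {S : Set (MvPowerSeries σ R)} {i : σ}
    (hS : ∀ g, X i * g ∈ Ideal.span S → g ∈ Ideal.span S) {g : MvPowerSeries σ R}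
    (hg : X i * g ∈ Ideal.span (expand q hq '' S)) : g ∈ Ideal.span (expand q hq '' S) := by
  rw [mem_span_image_expand_iff hq] at hg ⊢
  intro r hr
  by_cases hri : r i + 1 < q
  · rw [← frobeniusComponent_add_single_X_mul r i g]
    refine hg _ fun j => ?_
    rcases eq_or_ne j i with rfl | hj
    · simpa using hri
    · simpa [Finsupp.single_apply, Ne.symm hj] using hr j
  · have hri' : r i = q - 1 := by have := hr i; omega
    have hle : single i (q - 1) ≤ r := Finsupp.single_le_iff.mpr hri'.ge
    have := hg (r - single i (q - 1)) fun j => (tsub_le_self (a := r) j).trans_lt (hr j)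
    rw [frobeniusComponent_X_mul_of_eq_zero hq (by simp [hri']),
      tsub_add_cancel_of_le hle] at this
    exact hS _ this

theorem mem_span_image_expand_of_X_pow_mul_mem {S : Set (MvPowerSeries σ R)} {i : σ}
    (hS : ∀ g, X i * g ∈ Ideal.span S → g ∈ Ideal.span S) (n : ℕ) {g : MvPowerSeries σ R}
    (hg : X i ^ n * g ∈ Ideal.span (expand q hq '' S)) : g ∈ Ideal.span (expand q hq '' S) := by
  induction n generalizing g with
  | zero => simpa using hg
  | succ n ih =>
    refine mem_span_image_expand_of_X_mul_mem hq hS (ih ?_)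
    rwa [← mul_assoc, ← pow_succ]

end FrobeniusComponent

theorem mem_span_range_of_coeff_eq_sum_degree [Finite σ] {ι : Type*} [Fintype ι]
    {Δ : ι → MvPowerSeries σ R} {k : ι → ℕ} (hΔ : ∀ j, (Δ j).IsHomogeneous (k j))
    {h : (σ →₀ ℕ) → MvPowerSeries σ R} (hh : ∀ d, h d ∈ Ideal.span (Set.range Δ))
    (c : (σ →₀ ℕ) → R) {G : MvPowerSeries σ R}
    (hG : ∀ e, coeff e G = ∑ d ∈ (finite_of_degree_eq (degree e)).toFinset, c d * coeff e (h d)) :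
    G ∈ Ideal.span (Set.range Δ) := by
  classical
  choose a ha using fun d => Ideal.mem_span_range_iff_exists_fun.mp (hh d)
  -- By homogeneity of `Δ j`, only the `d` of degree `degree e` contribute to `coeff e (B j * Δ j)`.
  let B (j : ι) : MvPowerSeries σ R := fun e =>
    ∑ d ∈ (finite_of_degree_eq (degree e + k j)).toFinset, c d * coeff e (a d j)
  have hB (j : ι) (e : σ →₀ ℕ) : coeff e (B j) =
      ∑ d ∈ (finite_of_degree_eq (degree e + k j)).toFinset, c d * coeff e (a d j) := rfl
  refine Ideal.mem_span_range_iff_exists_fun.mpr ⟨B, MvPowerSeries.ext fun e => ?_⟩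
  simp_rw [hG, ← ha, map_sum, Finset.mul_sum]
  rw [Finset.sum_comm]
  refine Finset.sum_congr rfl fun j _ => ?_
  simp_rw [coeff_mul, Finset.mul_sum]
  rw [Finset.sum_comm]
  refine Finset.sum_congr rfl fun x hx => ?_
  by_cases hx₂ : degree x.2 = k j
  · have hdeg : degree x.1 + k j = degree e := by
      rw [← hx₂, ← map_add, Finset.HasAntidiagonal.mem_antidiagonal.mp hx]
    simp only [hB, hdeg, Finset.sum_mul, mul_assoc]
  · simp [IsHomogeneous.coeff_eq_zero (hΔ j) hx₂]

theorem X_mul_X_eq_monomial (i j : σ) :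
    (X i * X j : MvPowerSeries σ R) = monomial (single i 1 + single j 1) 1 := by
  rw [X_def, X_def, monomial_mul_monomial, mul_one]

theorem isHomogeneous_monomial (d : σ →₀ ℕ) (a : R) : (monomial d a).IsHomogeneous (degree d) := by
  classical
  intro e he
  rw [coeff_monomial] at he
  split_ifs at he with h
  · rw [h, degree_eq_weight_one]
    rfl
  · exact absurd rfl he

theorem isHomogeneous_X_mul_X_sub_X_mul_X (i j k l : σ) :
    (X i * X j - X k * X l : MvPowerSeries σ R).IsHomogeneous 2 := by
  have hdeg (a b : σ) : degree (single a 1 + single b 1) = 2 := by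
    rw [map_add, degree_single, degree_single]
  have h₁ : (monomial (single i 1 + single j 1) (1 : R)).IsHomogeneous 2 :=
    hdeg i j ▸ isHomogeneous_monomial _ _
  have h₂ : (monomial (single k 1 + single l 1) (-1 : R)).IsHomogeneous 2 :=
    hdeg k l ▸ isHomogeneous_monomial _ _
  rw [X_mul_X_eq_monomial, X_mul_X_eq_monomial, sub_eq_add_neg, ← map_neg]
  exact fun {_} => IsHomogeneous.add h₁ h₂

theorem monomial_sub_monomial_mem_of_le {J : Ideal (MvPowerSeries σ R)} {P Q d : σ →₀ ℕ}
    (hPQ : monomial P (1 : R) - monomial Q 1 ∈ J) (hP : P ≤ d) :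
    monomial d (1 : R) - monomial (d - P + Q) 1 ∈ J := by
  have : monomial d (1 : R) - monomial (d - P + Q) 1 =
      monomial (d - P) 1 * (monomial P 1 - monomial Q 1) := by
    rw [mul_sub, monomial_mul_monomial, monomial_mul_monomial, tsub_add_cancel_of_le hP, mul_one]
  rw [this]
  exact J.mul_mem_left _ hPQ

end MvPowerSeries

namespace GenericMinors

variable (R : Type*) [CommRing R]

/-- The `2 × 2` minors `vz - wy`, `wx - uz`, `uy - vx` of `!![u, v, w; x, y, z]`, where
`u, v, w, x, y, z` are `X 0, …, X 5`. -/
noncomputable def minors : Fin 3 → MvPowerSeries (Fin 6) R :=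
  ![X 1 * X 5 - X 2 * X 4, X 2 * X 3 - X 0 * X 5, X 0 * X 4 - X 1 * X 3]

noncomputable def minorsIdeal : Ideal (MvPowerSeries (Fin 6) R) :=
  Ideal.span (Set.range (minors R))

theorem range_minors : Set.range (minors R) =
    {X 1 * X 5 - X 2 * X 4, X 2 * X 3 - X 0 * X 5, X 0 * X 4 - X 1 * X 3} := by
  simp only [minors, Matrix.range_cons, Matrix.range_empty, Set.union_empty, Set.singleton_union]

theorem isHomogeneous_minors (j : Fin 3) : (minors R j).IsHomogeneous 2 := by
  fin_cases j <;> exact isHomogeneous_X_mul_X_sub_X_mul_X _ _ _ _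

/-- The exponents of `t, a, b, c` in the image of `X ^ d` under
`u, v, w, x, y, z ↦ as, bs, cs, at, bt, ct`, a substitution whose kernel is the ideal of minors. -/
def weight : (Fin 6 →₀ ℕ) →+ ℕ × ℕ × ℕ × ℕ where
  toFun d := (d 3 + d 4 + d 5, d 0 + d 3, d 1 + d 4, d 2 + d 5)
  map_zero' := rfl
  map_add' d d' := by simp only [Finsupp.add_apply, Prod.mk_add_mk]; ext <;> simp <;> ring

/-- Exponents divisible by none of `vx`, `wx`, `vz`, the leading terms of the minors. -/
def IsStandard (d : Fin 6 →₀ ℕ) : Prop :=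
  (d 1 = 0 ∨ d 3 = 0) ∧ (d 2 = 0 ∨ d 3 = 0) ∧ (d 1 = 0 ∨ d 5 = 0)

instance : DecidablePred IsStandard := fun _ => by unfold IsStandard; infer_instance

theorem eq_of_isStandard_of_weight_eq {d d' : Fin 6 →₀ ℕ} (hd : IsStandard d)
    (hd' : IsStandard d') (h : weight d = weight d') : d = d' := by
  simp only [weight, AddMonoidHom.coe_mk, ZeroHom.coe_mk, Prod.mk.injEq] at h
  unfold IsStandard at hd hd'
  ext i
  fin_cases i <;> simp <;> omega

theorem degree_eq_of_weight (d : Fin 6 →₀ ℕ) :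
    degree d = (weight d).2.1 + (weight d).2.2.1 + (weight d).2.2.2 := by
  simp only [degree_eq_sum, Fin.sum_univ_six, weight, AddMonoidHom.coe_mk, ZeroHom.coe_mk]
  ring

theorem finite_setOf_weight_add_eq (v w : ℕ × ℕ × ℕ × ℕ) :
    {d : Fin 6 →₀ ℕ | weight d + v = w}.Finite :=
  (finite_of_degree_le (w.2.1 + w.2.2.1 + w.2.2.2)).subset fun d hd => by
    change degree d ≤ _
    rw [degree_eq_of_weight, ← hd]
    simp only [Prod.snd_add, Prod.fst_add]
    omega

theorem finite_setOf_weight_eq (w : ℕ × ℕ × ℕ × ℕ) : {d : Fin 6 →₀ ℕ | weight d = w}.Finite := by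
  simpa using finite_setOf_weight_add_eq 0 w

/-- The coefficient at weight `w` of the image of `g` under the substitution defining `weight`. -/
noncomputable def weightSum (w : ℕ × ℕ × ℕ × ℕ) : MvPowerSeries (Fin 6) R →ₗ[R] R :=
  ∑ d ∈ (finite_setOf_weight_eq w).toFinset, coeff d

variable {R}

theorem weightSum_apply (w : ℕ × ℕ × ℕ × ℕ) (g : MvPowerSeries (Fin 6) R) :
    weightSum R w g = ∑ d ∈ (finite_setOf_weight_eq w).toFinset, coeff d g := by
  simp [weightSum]

theorem weightSum_mul_monomial (w : ℕ × ℕ × ℕ × ℕ) (g : MvPowerSeries (Fin 6) R)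
    (P : Fin 6 →₀ ℕ) : weightSum R w (g * monomial P 1) =
      ∑ a ∈ (finite_setOf_weight_add_eq (weight P) w).toFinset, coeff a g := by
  rw [weightSum_apply]
  symm
  refine Finset.sum_of_injOn (· + P) (add_left_injective P).injOn ?_ ?_ ?_
  · intro a ha
    simpa using ha
  · intro d hd hnot
    rw [coeff_mul_monomial, if_neg]
    rintro hP
    refine hnot ⟨d - P, ?_, tsub_add_cancel_of_le hP⟩
    simpa [← map_add, tsub_add_cancel_of_le hP] using hd
  · intro a _
    rw [coeff_mul_monomial, if_pos le_add_self, add_tsub_cancel_right, mul_one]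

theorem weightSum_add_weight_mul_monomial (w : ℕ × ℕ × ℕ × ℕ) (g : MvPowerSeries (Fin 6) R)
    (P : Fin 6 →₀ ℕ) : weightSum R (w + weight P) (g * monomial P 1) = weightSum R w g := by
  rw [weightSum_mul_monomial, weightSum_apply]
  congr 1
  ext a
  simp

theorem weightSum_mul_monomial_sub_monomial {P Q : Fin 6 →₀ ℕ} (hPQ : weight P = weight Q)
    (w : ℕ × ℕ × ℕ × ℕ) (g : MvPowerSeries (Fin 6) R) :
    weightSum R w (g * (monomial P 1 - monomial Q 1)) = 0 := by
  rw [mul_sub, map_sub, weightSum_mul_monomial, weightSum_mul_monomial, hPQ, sub_self]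

theorem weightSum_eq_zero_of_mem {g : MvPowerSeries (Fin 6) R}
    (hg : g ∈ minorsIdeal R) (w : ℕ × ℕ × ℕ × ℕ) : weightSum R w g = 0 := by
  suffices ∀ h, weightSum R w (h * g) = 0 by simpa using this 1
  induction hg using Submodule.span_induction with
  | mem x hx =>
    obtain ⟨j, rfl⟩ := hx
    intro h
    fin_cases j <;>
      simp only [minors, X_mul_X_eq_monomial] <;>
      exact weightSum_mul_monomial_sub_monomial (by simp [weight]) w h
  | zero => simp
  | add x y _ _ hx hy =>
    intro h
    rw [mul_add, map_add, hx, hy, add_zero]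
  | smul a x _ hx =>
    intro h
    rw [smul_eq_mul, ← mul_assoc, hx]

theorem exists_isStandard_monomial_sub_mem (d : Fin 6 →₀ ℕ) :
    ∃ d', IsStandard d' ∧ weight d' = weight d ∧
      monomial d (1 : R) - monomial d' 1 ∈ minorsIdeal R := by
  induction hn : 2 * d 1 + d 2 + 2 * d 3 + d 5 using Nat.strong_induction_on generalizing d with
  | _ n ih =>
  by_cases hd : IsStandard d
  · exact ⟨d, hd, rfl, by simp⟩
  have hmem (j : Fin 3) : minors R j ∈ minorsIdeal R := Ideal.subset_span ⟨j, rfl⟩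
  obtain ⟨P, Q, hPQ, hP, hw, hlt⟩ : ∃ P Q : Fin 6 →₀ ℕ,
      monomial P (1 : R) - monomial Q 1 ∈ minorsIdeal R ∧ P ≤ d ∧ weight P = weight Q ∧
        2 * (d - P + Q) 1 + (d - P + Q) 2 + 2 * (d - P + Q) 3 + (d - P + Q) 5 < n := by
    unfold IsStandard at hd
    by_cases h13 : d 1 ≠ 0 ∧ d 3 ≠ 0
    · refine ⟨single 1 1 + single 3 1, single 0 1 + single 4 1, ?_, ?_, by simp [weight], ?_⟩
      · simpa [minors, X_mul_X_eq_monomial] using neg_mem (hmem 2)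
      · intro i; fin_cases i <;> simp <;> omega
      · simp; omega
    by_cases h23 : d 2 ≠ 0 ∧ d 3 ≠ 0
    · refine ⟨single 2 1 + single 3 1, single 0 1 + single 5 1, ?_, ?_, by simp [weight], ?_⟩
      · simpa [minors, X_mul_X_eq_monomial] using hmem 1
      · intro i; fin_cases i <;> simp <;> omega
      · simp; omega
    · refine ⟨single 1 1 + single 5 1, single 2 1 + single 4 1, ?_, ?_, by simp [weight], ?_⟩
      · simpa [minors, X_mul_X_eq_monomial] using hmem 0
      · intro i; fin_cases i <;> simp <;> omega
      · simp; omega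
  obtain ⟨d', hd', hw', hmem'⟩ := ih _ hlt (d - P + Q) rfl
  refine ⟨d', hd', by rw [hw', map_add, ← hw, ← map_add, tsub_add_cancel_of_le hP], ?_⟩
  simpa using add_mem (monomial_sub_monomial_mem_of_le hPQ hP) hmem'

variable (R) in
/-- The normal form of `g` modulo the ideal of minors. -/
noncomputable def standardPart (g : MvPowerSeries (Fin 6) R) : MvPowerSeries (Fin 6) R :=
  fun e => if IsStandard e then weightSum R (weight e) g else 0

theorem coeff_standardPart (g : MvPowerSeries (Fin 6) R) (e : Fin 6 →₀ ℕ) :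
    coeff e (standardPart R g) = if IsStandard e then weightSum R (weight e) g else 0 := rfl

theorem sub_standardPart_mem (g : MvPowerSeries (Fin 6) R) :
    g - standardPart R g ∈ minorsIdeal R := by
  choose nf hnf hw hmem using exists_isStandard_monomial_sub_mem (R := R)
  have hnf_eq {d e : Fin 6 →₀ ℕ} : nf d = e ↔ IsStandard e ∧ weight d = weight e := by
    refine ⟨?_, fun ⟨he, hde⟩ => eq_of_isStandard_of_weight_eq (hnf d) he ((hw d).trans hde)⟩
    rintro rfl
    exact ⟨hnf d, (hw d).symm⟩
  refine mem_span_range_of_coeff_eq_sum_degree (k := fun _ => 2) (isHomogeneous_minors R) hmem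
    (fun d => coeff d g) fun e => ?_
  simp only [map_sub, coeff_monomial, mul_sub, mul_ite, mul_one, mul_zero,
    Finset.sum_sub_distrib, Finset.sum_ite_eq, Set.Finite.mem_toFinset, Set.mem_ofPred_eq,
    if_true, coeff_standardPart, ← Finset.sum_filter]
  congr 1
  split_ifs with he
  · rw [weightSum_apply]
    refine Finset.sum_congr (Finset.ext fun d => ?_) fun _ _ => rfl
    simp only [Finset.mem_filter, Set.Finite.mem_toFinset, Set.mem_ofPred_eq, eq_comm (a := e),
      hnf_eq, he, true_and]
    exact ⟨fun h => ⟨by rw [degree_eq_of_weight, h, ← degree_eq_of_weight], h⟩, fun h => h.2⟩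
  · refine (Finset.sum_eq_zero fun d hd => ?_).symm
    simp only [Finset.mem_filter, eq_comm (a := e), hnf_eq] at hd
    exact absurd hd.2.1 he

theorem weightSum_weight_standardPart {e : Fin 6 →₀ ℕ} (he : IsStandard e)
    (g : MvPowerSeries (Fin 6) R) :
    weightSum R (weight e) (standardPart R g) = coeff e (standardPart R g) := by
  rw [weightSum_apply]
  refine Finset.sum_eq_single_of_mem e (by simp) fun d hd hde => ?_
  rw [coeff_standardPart, if_neg]
  exact fun hd' => hde (eq_of_isStandard_of_weight_eq hd' he (by simpa using hd))

theorem mem_minorsIdeal_of_X_mul_mem {g : MvPowerSeries (Fin 6) R}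
    (hg : X 3 * g ∈ minorsIdeal R) : g ∈ minorsIdeal R := by
  have hk : standardPart R g * monomial (single 3 1) 1 ∈ minorsIdeal R := by
    rw [mul_comm, ← X_def]
    simpa [mul_sub] using sub_mem hg ((minorsIdeal R).mul_mem_left (X 3) (sub_standardPart_mem g))
  suffices standardPart R g = 0 by simpa [this] using sub_standardPart_mem g
  ext e
  by_cases he : IsStandard e
  · rw [← weightSum_weight_standardPart he, ← weightSum_add_weight_mul_monomial _ _ (single 3 1),
      weightSum_eq_zero_of_mem hk, map_zero]
  · rw [coeff_standardPart, if_neg he, map_zero]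

variable (R) in
noncomputable def frobeniusPowMinorsIdeal (q : ℕ) : Ideal (MvPowerSeries (Fin 6) R) :=
  Ideal.span (Set.range fun j => minors R j ^ q)

theorem frobeniusPowMinorsIdeal_eq (q : ℕ) : frobeniusPowMinorsIdeal R q =
    Ideal.span {(X 1 * X 5 - X 2 * X 4) ^ q, (X 2 * X 3 - X 0 * X 5) ^ q,
      (X 0 * X 4 - X 1 * X 3) ^ q} := by
  rw [frobeniusPowMinorsIdeal, show (fun j => minors R j ^ q) = (· ^ q) ∘ minors R from rfl,
    Set.range_comp, range_minors, Set.image_insert_eq, Set.image_insert_eq, Set.image_singleton]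

variable {p : ℕ} [ExpChar R p]

theorem expand_minors (n : ℕ) (hq : p ^ n ≠ 0) (j : Fin 3) :
    expand (p ^ n) hq (minors R j) = minors R j ^ p ^ n := by
  rw [← map_iterateFrobenius_expand p (expChar_ne_zero R p)]
  fin_cases j <;> simp [minors, map_X]

theorem mem_frobeniusPowMinorsIdeal_of_X_pow_mul_mem (n m : ℕ) {g : MvPowerSeries (Fin 6) R}
    (hg : X 3 ^ m * g ∈ frobeniusPowMinorsIdeal R (p ^ n)) :
    g ∈ frobeniusPowMinorsIdeal R (p ^ n) := by
  have hq : p ^ n ≠ 0 := pow_ne_zero n (expChar_ne_zero R p)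
  have hrange : Set.range (fun j => minors R j ^ p ^ n) =
      expand (p ^ n) hq '' Set.range (minors R) := by
    rw [← Set.range_comp]
    simp only [Function.comp_def, expand_minors]
  rw [frobeniusPowMinorsIdeal, hrange] at hg ⊢
  exact mem_span_image_expand_of_X_pow_mul_mem hq (fun _ => mem_minorsIdeal_of_X_mul_mem) m hg

theorem minors_mul_pow_mem_frobeniusPowMinorsIdeal (n : ℕ) {r : MvPowerSeries (Fin 6) R}
    (hr : r ∈ minorsIdeal R) :
    ((X 2 * X 3 - X 0 * X 5) * (X 0 * X 4 - X 1 * X 3)) ^ (p ^ n - 1) * r ∈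
      frobeniusPowMinorsIdeal R (p ^ n) := by
  set J := frobeniusPowMinorsIdeal R (p ^ n)
  obtain ⟨k, hk⟩ := Nat.exists_eq_add_one.mpr (pow_pos (expChar_pos R p) n)
  have hJ (j : Fin 3) : minors R j ^ (k + 1) ∈ J := hk ▸ Ideal.subset_span ⟨j, rfl⟩
  have syz : X 3 * minors R 0 + X 4 * minors R 1 + X 5 * minors R 2 = 0 := by
    simp only [minors, Matrix.cons_val]
    ring
  have h₀ : (minors R 1 * minors R 2) ^ k * minors R 0 ∈ J := by
    refine mem_frobeniusPowMinorsIdeal_of_X_pow_mul_mem n 1 ?_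
    have : X 3 ^ 1 * ((minors R 1 * minors R 2) ^ k * minors R 0) =
        -(X 4 * minors R 2 ^ k * minors R 1 ^ (k + 1) +
          X 5 * minors R 1 ^ k * minors R 2 ^ (k + 1)) := by
      linear_combination (minors R 1 ^ k * minors R 2 ^ k) * syz
    rw [this]
    exact neg_mem (add_mem (J.mul_mem_left _ (hJ 1)) (J.mul_mem_left _ (hJ 2)))
  have h₁ : (minors R 1 * minors R 2) ^ k * minors R 1 ∈ J := by
    rw [show (minors R 1 * minors R 2) ^ k * minors R 1 = minors R 2 ^ k * minors R 1 ^ (k + 1) by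
      ring]
    exact J.mul_mem_left _ (hJ 1)
  have h₂ : (minors R 1 * minors R 2) ^ k * minors R 2 ∈ J := by
    rw [show (minors R 1 * minors R 2) ^ k * minors R 2 = minors R 1 ^ k * minors R 2 ^ (k + 1) by
      ring]
    exact J.mul_mem_left _ (hJ 2)
  have hgen (j : Fin 3) : (minors R 1 * minors R 2) ^ k * minors R j ∈ J := by
    fin_cases j
    exacts [h₀, h₁, h₂]
  obtain ⟨c, rfl⟩ := Ideal.mem_span_range_iff_exists_fun.mp hr
  rw [Finset.mul_sum, show p ^ n - 1 = k by omega]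
  exact Ideal.sum_mem _ fun j _ => by rw [mul_left_comm]; exact J.mul_mem_left _ (hgen j)

end GenericMinors

theorem fedder_f_st_well_defined_general (F : Type*) [Field F] (p : ℕ) [Fact p.Prime] [CharP F p]
    (e : ℕ) (s t : ℕ) :
    letI A := MvPowerSeries (Fin 6) F
    letI u : A := X 0
    letI v : A := X 1
    letI w : A := X 2
    letI x : A := X 3
    letI y : A := X 4
    letI z : A := X 5
    letI Δ₁ : A := v * z - w * y
    letI Δ₂ : A := w * x - u * z
    letI Δ₃ : A := u * y - v * x
    letI I : Ideal A := Ideal.span {Δ₁, Δ₂, Δ₃}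
    letI Iq : Ideal A := Ideal.span {Δ₁ ^ p ^ e, Δ₂ ^ p ^ e, Δ₃ ^ p ^ e}
    ∀ f f' : A,
      y ^ s * z ^ t * (Δ₂ * Δ₃) ^ (p ^ e - 1) - x ^ (s + t) * f ∈ Iq →
      y ^ s * z ^ t * (Δ₂ * Δ₃) ^ (p ^ e - 1) - x ^ (s + t) * f' ∈ Iq →
      f - f' ∈ Iq ∧ ∀ r ∈ I, f * r ∈ Iq := by
  rw [← GenericMinors.range_minors, ← GenericMinors.minorsIdeal,
    ← GenericMinors.frobeniusPowMinorsIdeal_eq]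
  intro f f' hf hf'
  set Iq := GenericMinors.frobeniusPowMinorsIdeal F (p ^ e)
  have cancel {g : MvPowerSeries (Fin 6) F} (hg : X 3 ^ (s + t) * g ∈ Iq) : g ∈ Iq :=
    GenericMinors.mem_frobeniusPowMinorsIdeal_of_X_pow_mul_mem e (s + t) hg
  refine ⟨cancel ?_, fun r hr => cancel ?_⟩
  · simpa [mul_sub] using sub_mem hf' hf
  · convert sub_mem (Iq.mul_mem_left (X 4 ^ s * X 5 ^ t)
      (GenericMinors.minors_mul_pow_mem_frobeniusPowMinorsIdeal e hr)) (Iq.mul_mem_right r hf)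
      using 1
    ring

/-- Let `A = F[[u,v,w,x,y,z]]`, `char F = p > 0`, and
`I = (Δ₁, Δ₂, Δ₃)` the ideal of 2×2 minors of the 2×3 generic matrix
(`Δ₁ = vz − wy`, `Δ₂ = wx − uz`, `Δ₃ = uy − vx`).  For `q = p^e` and `s + t ≤ q − 1`, an
element `f` with `y^s z^t (Δ₂Δ₃)^{q−1} ≡ x^{s+t} f (mod I^{[q]})` is well-defined modulo
`I^{[q]}` (any two such choices agree mod `I^{[q]}`), and satisfies `f·I ⊆ I^{[q]}`, i.e.
`f ∈ I^{[q]} :_A I`. -/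
theorem fedder_f_st_well_defined (F : Type*) [Field F] (p : ℕ) [Fact p.Prime] [CharP F p]
    (e : ℕ) (s t : ℕ) (hst : s + t ≤ p ^ e - 1) :
    letI A := MvPowerSeries (Fin 6) F
    letI u : A := X 0
    letI v : A := X 1
    letI w : A := X 2
    letI x : A := X 3
    letI y : A := X 4
    letI z : A := X 5
    letI Δ₁ : A := v * z - w * y
    letI Δ₂ : A := w * x - u * z
    letI Δ₃ : A := u * y - v * x
    letI I : Ideal A := Ideal.span {Δ₁, Δ₂, Δ₃}
    letI Iq : Ideal A := Ideal.span {Δ₁ ^ p ^ e, Δ₂ ^ p ^ e, Δ₃ ^ p ^ e}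
    ∀ f f' : A,
      y ^ s * z ^ t * (Δ₂ * Δ₃) ^ (p ^ e - 1) - x ^ (s + t) * f ∈ Iq →
      y ^ s * z ^ t * (Δ₂ * Δ₃) ^ (p ^ e - 1) - x ^ (s + t) * f' ∈ Iq →
      f - f' ∈ Iq ∧ ∀ r ∈ I, f * r ∈ Iq :=
  fedder_f_st_well_defined_general F p e s t
end
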